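/- arXiv:1605.07126 — 9 statements merged into one kernel-verified Lean document; each statement's English description precedes it below -/
import Mathlib

section
/- Let (G, <) be an ordered nilpotent group of class 2 and let S = {x_1, ..., x_k} be a subset of G with x_1 < x_2 < ... < x_k and k ≥ 3. If x_k and x_{k-1} do not commute, then |S²| ≥ |T²| + 4, where T = {x_1, ..., x_{k-1}} and S² = {st : s, t ∈ S}. -/
open Pointwise
open scoped commutatorElement

/-!
Let `a > b > c` be the three largest elements of `S`. Every product in `T²` other than `b²` is at
most `max (b * c) (c * b)`, while `a * b`, `b * a` and `a²` lie above `b²`. So it suffices to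
find one more element of `S²` above `max (b * c) (c * b)` and different from `b²`, `a * b`,
`b * a`; one of `a * c`, `c * a` is such an element. Excluding the alternative is a case analysis
in which conjugation is used as an order automorphism: in class 2, conjugating `b` by `c` only
multiplies it by the central element `⁅c, b⁆`, which bounds `c * a` from below when `a * c = b²`,
and the other cases force `a` and `b` to commute.
-/

section ClassTwo

variable {G : Type*} [Group G]

theorem conj_eq_commutator_mul (g b : G) : g * b * g⁻¹ = ⁅g, b⁆ * b := by
  rw [commutatorElement_def]; group

theorem commute_of_eq_mul_of_mem_center {r b c : G} (hr : r ∈ Subgroup.center G)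
    (hc : c = r * b) : Commute b c :=
  hc ▸ (show Commute b r from Subgroup.mem_center_iff.1 hr b).mul_right (Commute.refl b)

theorem commute_conj (hG : ∀ x y : G, ⁅x, y⁆ ∈ Subgroup.center G) (g b : G) :
    Commute b (g * b * g⁻¹) :=
  commute_of_eq_mul_of_mem_center (hG g b) (conj_eq_commutator_mul g b)

theorem conj_conj_eq_commutator_mul_commutator_mul
    (hG : ∀ x y : G, ⁅x, y⁆ ∈ Subgroup.center G) (g b : G) :
    g * (g * b * g⁻¹) * g⁻¹ = ⁅g, b⁆ * (⁅g, b⁆ * b) := by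
  have hr := Subgroup.mem_center_iff.1 (hG g b)
  calc g * (g * b * g⁻¹) * g⁻¹ = g * (⁅g, b⁆ * b) * g⁻¹ := by
        rw [conj_eq_commutator_mul g b]
    _ = ⁅g, b⁆ * (g * b * g⁻¹) := by rw [← mul_assoc g, hr g]; simp only [mul_assoc]
    _ = ⁅g, b⁆ * (⁅g, b⁆ * b) := by rw [conj_eq_commutator_mul]

theorem commute_of_mul_eq_mul_self_of_swap_eq_mul
    (hG : ∀ x y : G, ⁅x, y⁆ ∈ Subgroup.center G) {a b c : G}
    (h1 : a * c = b * b) (h2 : c * a = a * b) : Commute a b := by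
  have hz := Subgroup.mem_center_iff.1 (hG a b)
  have hc : c = ⁅a, b⁆ * b := by rw [← conj_eq_commutator_mul, ← h2]; group
  refine commute_of_eq_mul_of_mem_center (hG a b) (mul_right_cancel (b := b) ?_)
  rw [← h1, hc, ← hz a]; group

theorem commute_of_mul_eq_mul_of_swap_eq_mul_self
    (hG : ∀ x y : G, ⁅x, y⁆ ∈ Subgroup.center G) {a b c : G}
    (h1 : a * c = b * a) (h2 : c * a = b * b) : Commute a b := by
  have ht := Subgroup.mem_center_iff.1 (hG a⁻¹ b)
  have hc : c = ⁅a⁻¹, b⁆ * b := by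
    rw [← conj_eq_commutator_mul, inv_inv, mul_assoc, ← h1]; group
  refine commute_of_eq_mul_of_mem_center (hG a⁻¹ b) (mul_left_cancel (a := b) ?_)
  rw [← h2, hc, ← mul_assoc, ht b]

end ClassTwo

section Ordered

variable {G : Type*} [Group G] [LinearOrder G] [MulLeftStrictMono G] [MulRightStrictMono G]

theorem conj_lt_conj {x y : G} (h : x < y) (g : G) : g * x * g⁻¹ < g * y * g⁻¹ :=
  mul_lt_mul_left (mul_lt_mul_right h g) g⁻¹

theorem lt_conj_of_commute {g b c : G} (hgc : g * c = c * g) (hcb : c < b) :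
    c < g * b * g⁻¹ :=
  calc c = g * c * g⁻¹ := by rw [hgc, mul_inv_cancel_right]
    _ < g * b * g⁻¹ := conj_lt_conj hcb g

theorem lt_commutator_mul_commutator_mul (hG : ∀ x y : G, ⁅x, y⁆ ∈ Subgroup.center G)
    {g b c : G} (hgc : g * c = c * g) (hcb : c < b) : c < ⁅g, b⁆ * (⁅g, b⁆ * b) := by
  rw [← conj_conj_eq_commutator_mul_commutator_mul hG]
  exact lt_conj_of_commute hgc (lt_conj_of_commute hgc hcb)

theorem mul_lt_mul_swap_of_mul_eq_mul_self (hG : ∀ x y : G, ⁅x, y⁆ ∈ Subgroup.center G)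
    {a b c : G} (hcb : c < b) (h : a * c = b * b) : b * c < c * a := by
  have hr := Subgroup.mem_center_iff.1 (hG c b)
  calc b * c < b * (⁅c, b⁆ * (⁅c, b⁆ * b)) :=
        mul_lt_mul_right (lt_commutator_mul_commutator_mul hG rfl hcb) b
    _ = (⁅c, b⁆ * b) * (⁅c, b⁆ * b) := by rw [← mul_assoc b, hr b, mul_assoc]
    _ = c * (a * c) * c⁻¹ := by rw [h, ← conj_eq_commutator_mul]; group
    _ = c * a := by group

theorem mul_lt_mul_swap_of_mul_swap_eq_mul_self (hG : ∀ x y : G, ⁅x, y⁆ ∈ Subgroup.center G)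
    {a b c : G} (hcb : c < b) (h : c * a = b * b) : c * b < a * c := by
  have hr := Subgroup.mem_center_iff.1 (hG c⁻¹ b)
  calc c * b < (⁅c⁻¹, b⁆ * (⁅c⁻¹, b⁆ * b)) * b :=
        mul_lt_mul_left (lt_commutator_mul_commutator_mul hG (by group) hcb) b
    _ = (⁅c⁻¹, b⁆ * b) * (⁅c⁻¹, b⁆ * b) := by
      simp only [mul_assoc]; rw [← mul_assoc b ⁅c⁻¹, b⁆, hr b, mul_assoc]
    _ = c⁻¹ * (c * a) * c⁻¹⁻¹ := by rw [h, ← conj_eq_commutator_mul]; group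
    _ = a * c := by group

theorem commute_of_mul_eq_mul_self_of_swap_eq_mul_self {a b c : G}
    (h1 : a * c = b * b) (h2 : c * a = b * b) : Commute a b := by
  have hsq : (c * b * c⁻¹) ^ 2 = b ^ 2 := by
    rw [sq, sq, ← h2, ← mul_inv_cancel_right (c * a) c, mul_assoc c a, h1]; group
  have hbc : c * b = b * c := by
    rw [← mul_inv_eq_iff_eq_mul, (pow_left_strictMono two_ne_zero).injective hsq]
  refine mul_right_cancel (b := c) ?_
  rw [mul_assoc, ← hbc, ← mul_assoc, h1, mul_assoc b a, h1, mul_assoc]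

theorem exists_cross_mul_gt_of_not_commute (hG : ∀ x y : G, ⁅x, y⁆ ∈ Subgroup.center G)
    {a b c : G} (hcb : c < b) (hba : b < a) (hab : ¬Commute a b) :
    ∃ w, (w = a * c ∨ w = c * a) ∧ max (b * c) (c * b) < w ∧
      w ≠ b * b ∧ w ≠ a * b ∧ w ≠ b * a := by
  have hbc_ac : b * c < a * c := mul_lt_mul_left hba c
  have hcb_ca : c * b < c * a := mul_lt_mul_right hba c
  suffices (c * b < a * c ∧ a * c ≠ b * b ∧ a * c ≠ b * a) ∨
      (b * c < c * a ∧ c * a ≠ b * b ∧ c * a ≠ a * b) by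
    rcases this with ⟨hlt, hbb, hba'⟩ | ⟨hlt, hbb, hab'⟩
    · exact ⟨a * c, .inl rfl, max_lt hbc_ac hlt, hbb,
        fun h => hcb.ne (mul_left_cancel h), hba'⟩
    · exact ⟨c * a, .inr rfl, max_lt hlt hcb_ca, hbb, hab',
        fun h => hcb.ne (mul_right_cancel h)⟩
  by_cases hac : a * c = b * a
  · have hbc : Commute b c := by
      convert commute_conj hG a⁻¹ b
      rw [inv_inv, mul_assoc, ← hac]; group
    refine .inr ⟨hbc.eq ▸ hcb_ca,
      fun h => hab (commute_of_mul_eq_mul_of_swap_eq_mul_self hG hac h), fun hca => ?_⟩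
    -- conjugation by `a` would swap `c < b`
    have hb : b = a * c * a⁻¹ := by rw [hac]; group
    have hc' : c = a * b * a⁻¹ := by rw [← hca]; group
    have hlt := conj_lt_conj hcb a
    rw [← hb, ← hc'] at hlt
    exact hlt.not_gt hcb
  by_cases hca : c * a = a * b
  · have hbc : Commute b c := by
      convert commute_conj hG a b
      rw [← hca]; group
    exact .inl ⟨hbc.eq ▸ hbc_ac,
      fun h => hab (commute_of_mul_eq_mul_self_of_swap_eq_mul hG h hca), hac⟩
  by_cases hac2 : a * c = b * b
  · exact .inr ⟨mul_lt_mul_swap_of_mul_eq_mul_self hG hcb hac2,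
      fun h => hab (commute_of_mul_eq_mul_self_of_swap_eq_mul_self hac2 h), hca⟩
  by_cases hca2 : c * a = b * b
  · exact .inl ⟨mul_lt_mul_swap_of_mul_swap_eq_mul_self hG hcb hca2, hac2, hac⟩
  rcases lt_or_ge (c * b) (a * c) with hlt | hle
  · exact .inl ⟨hlt, hac2, hac⟩
  · exact .inr ⟨(hbc_ac.trans_le hle).trans hcb_ca, hca2, hca⟩

theorem eq_mul_self_or_le_of_mem_mul {T : Finset G} {b c : G} (hcb : c ≤ b)
    (hT : ∀ u ∈ T, u = b ∨ u ≤ c) {v : G} (hv : v ∈ T * T) :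
    v = b * b ∨ v ≤ max (b * c) (c * b) := by
  obtain ⟨p, hp, q, hq, rfl⟩ := Finset.mem_mul.1 hv
  have hqb : q ≤ b := (hT q hq).elim le_of_eq (·.trans hcb)
  rcases hT p hp with rfl | hpc
  · rcases hT q hq with rfl | hqc
    · exact .inl rfl
    · exact .inr ((mul_right_strictMono.monotone hqc).trans (le_max_left _ _))
  · exact .inr ((mul_left_strictMono.monotone hpc).trans
      ((mul_right_strictMono.monotone hqb).trans (le_max_right _ _)))

theorem notMem_mul_of_max_lt {T : Finset G} {b c : G} (hcb : c ≤ b)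
    (hT : ∀ u ∈ T, u = b ∨ u ≤ c) {v : G} (hv : max (b * c) (c * b) < v) (hvb : v ≠ b * b) :
    v ∉ T * T :=
  fun h => (eq_mul_self_or_le_of_mem_mul hcb hT h).elim hvb (·.not_gt hv)

theorem card_mul_self_add_four_le (hG : ∀ x y : G, ⁅x, y⁆ ∈ Subgroup.center G)
    {S T : Finset G} {a b c : G} (hTS : T ⊆ S) (ha : a ∈ S) (hb : b ∈ T) (hc : c ∈ T)
    (hcb : c < b) (hba : b < a) (hT : ∀ u ∈ T, u = b ∨ u ≤ c) (hab : ¬Commute a b) :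
    (T * T).card + 4 ≤ (S * S).card := by
  obtain ⟨w, hw, hMw, hw_bb, hw_ab, hw_ba⟩ := exists_cross_mul_gt_of_not_commute hG hcb hba hab
  have hM_bb : max (b * c) (c * b) < b * b :=
    max_lt (mul_lt_mul_right hcb b) (mul_lt_mul_left hcb b)
  have hbb_ab : b * b < a * b := mul_lt_mul_left hba b
  have hbb_ba : b * b < b * a := mul_lt_mul_right hba b
  have hab_aa : a * b < a * a := mul_lt_mul_right hba a
  have hba_aa : b * a < a * a := mul_lt_mul_left hba a
  have hw_aa : w < a * a := by
    rcases hw with rfl | rfl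
    exacts [mul_lt_mul_right (hcb.trans hba) a, mul_lt_mul_left (hcb.trans hba) a]
  have hwS : w ∈ S * S := by
    rcases hw with rfl | rfl
    exacts [Finset.mul_mem_mul ha (hTS hc), Finset.mul_mem_mul (hTS hc) ha]
  set N : Finset G := {a * b, b * a, a * a, w}
  have hN : N.card = 4 := by
    have hab' : a * b ≠ b * a := hab
    rw [Finset.card_insert_of_notMem, Finset.card_insert_of_notMem, Finset.card_pair hw_aa.ne']
    · simp [hba_aa.ne, hw_ba.symm]
    · simp [hab', hab_aa.ne, hw_ab.symm]
  have notMem_of_gt : ∀ v, b * b < v → v ∉ T * T := fun _ hv =>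
    notMem_mul_of_max_lt hcb.le hT (hM_bb.trans hv) hv.ne'
  have hdisj : Disjoint (T * T) N := by
    refine Finset.disjoint_right.2 fun v hv => ?_
    simp only [N, Finset.mem_insert, Finset.mem_singleton] at hv
    rcases hv with rfl | rfl | rfl | rfl
    exacts [notMem_of_gt _ hbb_ab, notMem_of_gt _ hbb_ba, notMem_of_gt _ (hbb_ab.trans hab_aa),
      notMem_mul_of_max_lt hcb.le hT hMw hw_bb]
  have hNS : N ⊆ S * S := by
    simp [N, Finset.insert_subset_iff, Finset.mul_mem_mul, ha, hwS, hTS hb]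
  calc (T * T).card + 4 = (T * T ∪ N).card := by rw [Finset.card_union_of_disjoint hdisj, hN]
    _ ≤ (S * S).card :=
      Finset.card_le_card (Finset.union_subset (Finset.mul_subset_mul hTS hTS) hNS)

end Ordered

/-- Lemma 2.1: In an ordered nilpotent group of class 2, if the top two elements
of a strictly increasing finite set `S = {x 0 < ... < x (k-1)}` (with `k ≥ 3`) do not
commute, then `|S²| ≥ |T²| + 4` where `T` consists of the first `k-1` elements. -/
theorem stmt_0 {G : Type*} [Group G] [LinearOrder G]
    [CovariantClass G G (· * ·) (· < ·)]
    [CovariantClass G G (Function.swap (· * ·)) (· < ·)]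
    (hG : ∀ x y : G, ⁅x, y⁆ ∈ Subgroup.center G)
    (k : ℕ) (hk : 3 ≤ k) (x : ℕ → G)
    (hmono : ∀ i j : ℕ, i < j → j < k → x i < x j)
    (hnc : x (k - 1) * x (k - 2) ≠ x (k - 2) * x (k - 1))
    (S T : Finset G)
    (hS : S = (Finset.range k).image x)
    (hT : T = (Finset.range (k - 1)).image x) :
    (T * T).card + 4 ≤ (S * S).card := by
  subst hS hT
  have mem_image : ∀ {n i : ℕ}, i < n → x i ∈ (Finset.range n).image x :=
    fun hi => Finset.mem_image_of_mem x (Finset.mem_range.2 hi)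
  refine card_mul_self_add_four_le hG (a := x (k - 1)) (b := x (k - 2)) (c := x (k - 3))
    (Finset.image_subset_image (Finset.range_subset_range.2 (by omega)))
    (mem_image (by omega)) (mem_image (by omega)) (mem_image (by omega))
    (hmono _ _ (by omega) (by omega)) (hmono _ _ (by omega) (by omega)) ?_ hnc
  simp only [Finset.forall_mem_image, Finset.mem_range]
  intro i hi
  rcases (by omega : i = k - 2 ∨ i = k - 3 ∨ i < k - 3) with rfl | rfl | hlt
  · exact .inl rfl
  · exact .inr le_rfl
  · exact .inr (hmono _ _ hlt (by omega)).le
end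

section
/- Let S be a finite subset of size k of an ordered nilpotent group of class 2 such that no two distinct elements of S commute (S is completely-non-abelian). Then |S²| ≥ 4k - 4. -/
open Pointwise
open scoped commutatorElement

open Finset

/-!
Write `S = {x₀ < ⋯ < xₙ}`. Multiplication is strictly monotone in each factor, so the squares
`xᵢ²` increase strictly, and `xᵢxᵢ₊₁ ≠ xᵢ₊₁xᵢ` both lie strictly between `xᵢ²` and `xᵢ₊₁²`:
this gives `3n + 1` products. For each `t ≤ n - 2` a product of `xₜ` and `xₜ₊₂` lies strictly
between `xₜ²` and `xₜ₊₂²`, so it can only collide with products of neighbouring indices. In a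
class-2 group `yx` is a central multiple of `xy`, and each such collision would make two elements
of `S` commute, except `xₜxₜ₊₂ = xₜ₊₁²` or `xₜ₊₂xₜ = xₜ₊₁²` (at most one of them holds), which a
suitable choice of the order avoids. This yields `4n = 4|S| - 4` distinct products.
-/

section ClassTwo

variable {G : Type*} [Group G]

lemma commute_of_mul_eq_mul (hG : ∀ x y : G, ⁅x, y⁆ ∈ Subgroup.center G) {a b c : G}
    (h : a * b = c * a) : Commute c b := by
  have hc : c = ⁅a, b⁆ * b := by
    rw [← conj_eq_commutatorElement_mul, MulAut.conj_apply, h, mul_inv_cancel_right]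
  rw [hc]
  exact Commute.mul_left (Subgroup.mem_center_iff.mp (hG a b) b).symm (Commute.refl b)

lemma commute_mul_of_mul_eq_mul_self (hG : ∀ x y : G, ⁅x, y⁆ ∈ Subgroup.center G)
    {p q r : G} (h : p * r = q * q) : Commute (r * p) q := by
  have hrp : r * p = ⁅r, p⁆ * (q * q) := by
    rw [← h, commutatorElement_def]; group
  rw [hrp]
  exact Commute.mul_left (Subgroup.mem_center_iff.mp (hG r p) q).symm
    ((Commute.refl q).mul_left (Commute.refl q))

open Classical in
/-- One of the two products of `a` and `c`, chosen to differ from `b * b` whenever possible. -/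
noncomputable def skipProd (a b c : G) : G :=
  if a * c = b * b then c * a else a * c

lemma skipProd_eq_or (a b c : G) : skipProd a b c = c * a ∨ skipProd a b c = a * c := by
  unfold skipProd; split_ifs <;> simp

lemma skipProd_ne_mul_self {a c : G} (b : G) (hac : ¬Commute a c) : skipProd a b c ≠ b * b := by
  unfold skipProd
  split_ifs with h
  · exact fun h' => hac (h.trans h'.symm)
  · exact h

section Ordered

variable [LinearOrder G] [MulLeftStrictMono G] [MulRightStrictMono G]

lemma skipProd_mem_Ioo {a c : G} (b : G) (hac : a < c) :
    skipProd a b c ∈ Set.Ioo (a * a) (c * c) := by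
  rcases skipProd_eq_or a b c with h | h <;> rw [h]
  · exact ⟨mul_lt_mul_left hac a, mul_lt_mul_right hac c⟩
  · exact ⟨mul_lt_mul_right hac a, mul_lt_mul_left hac c⟩

lemma skipProd_not_mem_left (hG : ∀ x y : G, ⁅x, y⁆ ∈ Subgroup.center G) {a b c : G}
    (hbc : b < c) (hnc : ¬Commute b c) : skipProd a b c ∉ ({a * b, b * a} : Set G) := by
  rintro (h | h) <;> rcases skipProd_eq_or a b c with h' | h' <;> rw [h'] at h
  · exact hnc (commute_of_mul_eq_mul hG h.symm).symm
  · exact (mul_lt_mul_right hbc a).ne' h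
  · exact (mul_lt_mul_left hbc a).ne' h
  · exact hnc (commute_of_mul_eq_mul hG h)

lemma skipProd_not_mem_right (hG : ∀ x y : G, ⁅x, y⁆ ∈ Subgroup.center G) {a b c : G}
    (hab : a < b) (hnc : ¬Commute a b) : skipProd a b c ∉ ({b * c, c * b} : Set G) := by
  rintro (h | h) <;> rcases skipProd_eq_or a b c with h' | h' <;> rw [h'] at h
  · exact hnc (commute_of_mul_eq_mul hG h).symm
  · exact (mul_lt_mul_left hab c).ne h
  · exact (mul_lt_mul_right hab c).ne h
  · exact hnc (commute_of_mul_eq_mul hG h.symm)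

lemma skipProd_ne_skipProd (hG : ∀ x y : G, ⁅x, y⁆ ∈ Subgroup.center G) {a b c d : G}
    (hab : a < b) (hcd : c < d) (hac : ¬Commute a c) (hbd : ¬Commute b d) :
    skipProd a b c ≠ skipProd b c d := by
  unfold skipProd
  split_ifs with h₁ h₂ h₂
  · exact (mul_lt_mul_of_lt_of_lt hcd hab).ne
  · intro h
    have := commute_mul_of_mul_eq_mul_self hG h₁
    rw [h] at this
    exact hbd ((IsLeftRegular.all b).commute_mul_left_iff.mp this)
  · intro h
    have := commute_mul_of_mul_eq_mul_self hG h₂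
    rw [← h] at this
    exact hac ((IsRightRegular.all c).commute_mul_right_iff.mp this).symm
  · exact (mul_lt_mul_of_lt_of_lt hab hcd).ne

end Ordered

end ClassTwo

lemma StrictMonoOn.lt_and_lt_of_mem_Ioo {ι α : Type*} [LinearOrder ι] [Preorder α] {f : ι → α}
    {t : Set ι} (hf : StrictMonoOn f t) {a b c d : ι} (ha : a ∈ t) (hb : b ∈ t) (hc : c ∈ t)
    (hd : d ∈ t) {y : α} (h₁ : y ∈ Set.Ioo (f a) (f b)) (h₂ : y ∈ Set.Ioo (f c) (f d)) :
    a < d ∧ c < b :=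
  ⟨(hf.lt_iff_lt ha hd).1 (h₁.1.trans h₂.2), (hf.lt_iff_lt hc hb).1 (h₂.1.trans h₁.2)⟩

lemma Finset.exists_strictMonoOn_image_range {α : Type*} [LinearOrder α] {S : Finset α} {n : ℕ}
    (hS : #S = n + 1) :
    ∃ x : ℕ → α, StrictMonoOn x (Set.Iic n) ∧ (range (n + 1)).image x = S := by
  refine ⟨fun i => S.orderEmbOfFin hS (Fin.clamp i n), fun i hi j hj hij => ?_, ?_⟩
  · refine (S.orderEmbOfFin hS).strictMono ?_
    simp only [Fin.clamp, Fin.mk_lt_mk]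
    rw [Set.mem_Iic] at hi hj
    omega
  · ext g
    simp only [mem_image, mem_range]
    constructor
    · rintro ⟨i, -, rfl⟩
      exact S.orderEmbOfFin_mem hS _
    · intro hg
      obtain ⟨i, rfl⟩ : g ∈ Set.range (S.orderEmbOfFin hS) := by
        rw [range_orderEmbOfFin]; exact hg
      refine ⟨i, i.isLt, congrArg _ (Fin.ext ?_)⟩
      simp [Fin.clamp, Nat.le_of_lt_succ i.isLt]

section Counting

variable {G : Type*} [Group G] [LinearOrder G] [MulLeftStrictMono G] [MulRightStrictMono G]
  {x : ℕ → G} {n : ℕ}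

lemma skipProd_mem_Ioo_of_lt (hx : StrictMonoOn x (Set.Iic n)) {t : ℕ} (ht : t < n - 1) :
    skipProd (x t) (x (t + 1)) (x (t + 2)) ∈ Set.Ioo (x t * x t) (x (t + 2) * x (t + 2)) :=
  skipProd_mem_Ioo _ (hx (show _ ≤ n by omega) (show _ ≤ n by omega) (by omega))

variable [DecidableEq G]

variable (x n) in
def squares : Finset G := (range (n + 1)).image fun i => x i * x i

variable (x n) in
def adjacentProducts : Finset G :=
  (range n).biUnion fun i => {x i * x (i + 1), x (i + 1) * x i}

variable (x n) in
noncomputable def skipProducts : Finset G :=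
  (range (n - 1)).image fun t => skipProd (x t) (x (t + 1)) (x (t + 2))

lemma mem_Ioo_of_mem_pair (hx : StrictMonoOn x (Set.Iic n)) {i : ℕ} (hi : i < n) {g : G}
    (hg : g ∈ ({x i * x (i + 1), x (i + 1) * x i} : Finset G)) :
    g ∈ Set.Ioo (x i * x i) (x (i + 1) * x (i + 1)) := by
  have hlt : x i < x (i + 1) := hx (show _ ≤ n by omega) (show _ ≤ n by omega) (Nat.lt_succ_self i)
  rcases mem_insert.1 hg with rfl | hg
  · exact ⟨mul_lt_mul_right hlt _, mul_lt_mul_left hlt _⟩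
  · rw [mem_singleton.1 hg]
    exact ⟨mul_lt_mul_left hlt _, mul_lt_mul_right hlt _⟩

lemma card_squares (hx : StrictMonoOn x (Set.Iic n)) : #(squares x n) = n + 1 := by
  rw [squares, card_image_of_injOn, card_range]
  exact (hx.mul' hx).injOn.mono fun i hi => Nat.lt_succ_iff.1 (mem_range.1 hi)

lemma card_adjacentProducts (hx : StrictMonoOn x (Set.Iic n))
    (hnc : ∀ i ≤ n, ∀ j ≤ n, i ≠ j → ¬Commute (x i) (x j)) :
    #(adjacentProducts x n) = 2 * n := by
  rw [adjacentProducts, card_biUnion]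
  · rw [sum_const_nat fun i hi =>
      card_pair (hnc i (mem_range.1 hi).le (i + 1) (mem_range.1 hi) (by omega)), card_range,
      mul_comm]
  · intro i hi j hj hij
    simp only [coe_range, Set.mem_Iio] at hi hj
    refine disjoint_left.2 fun g hgi hgj => hij ?_
    have := (hx.mul' hx).lt_and_lt_of_mem_Ioo (show _ ≤ n by omega) (show _ ≤ n by omega)
      (show _ ≤ n by omega) (show _ ≤ n by omega) (mem_Ioo_of_mem_pair hx hi hgi)
      (mem_Ioo_of_mem_pair hx hj hgj)
    omega

lemma card_skipProducts (hG : ∀ x y : G, ⁅x, y⁆ ∈ Subgroup.center G)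
    (hx : StrictMonoOn x (Set.Iic n))
    (hnc : ∀ i ≤ n, ∀ j ≤ n, i ≠ j → ¬Commute (x i) (x j)) :
    #(skipProducts x n) = n - 1 := by
  rw [skipProducts, card_image_of_injOn, card_range]
  have adjacent : ∀ t, t + 1 < n - 1 → skipProd (x t) (x (t + 1)) (x (t + 2)) ≠
      skipProd (x (t + 1)) (x (t + 2)) (x (t + 3)) := fun t ht =>
    skipProd_ne_skipProd hG (hx (show _ ≤ n by omega) (show _ ≤ n by omega) (by omega))
      (hx (show _ ≤ n by omega) (show _ ≤ n by omega) (by omega))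
      (hnc t (by omega) (t + 2) (by omega) (by omega))
      (hnc (t + 1) (by omega) (t + 3) (by omega) (by omega))
  intro t ht u hu (h : skipProd _ _ _ = skipProd _ _ _)
  simp only [coe_range, Set.mem_Iio] at ht hu
  have hu' := skipProd_mem_Ioo_of_lt hx hu
  rw [← h] at hu'
  have := (hx.mul' hx).lt_and_lt_of_mem_Ioo (show _ ≤ n by omega) (show _ ≤ n by omega)
    (show _ ≤ n by omega) (show _ ≤ n by omega) (skipProd_mem_Ioo_of_lt hx ht) hu'
  rcases (by omega : t = u ∨ u = t + 1 ∨ t = u + 1) with rfl | rfl | rfl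
  · rfl
  · exact absurd h (adjacent t hu)
  · exact absurd h.symm (adjacent u ht)

lemma disjoint_squares_adjacentProducts (hx : StrictMonoOn x (Set.Iic n)) :
    Disjoint (squares x n) (adjacentProducts x n) := by
  simp only [squares, adjacentProducts, disjoint_left, mem_image, mem_biUnion, mem_range]
  rintro _ ⟨i, hi, rfl⟩ ⟨j, hj, hg⟩
  obtain ⟨hji, hij⟩ := mem_Ioo_of_mem_pair hx hj hg
  rw [(hx.mul' hx).lt_iff_lt (show _ ≤ n by omega) (show _ ≤ n by omega)] at hji hij
  omega

lemma disjoint_squares_skipProducts (hx : StrictMonoOn x (Set.Iic n))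
    (hnc : ∀ i ≤ n, ∀ j ≤ n, i ≠ j → ¬Commute (x i) (x j)) :
    Disjoint (squares x n) (skipProducts x n) := by
  simp only [squares, skipProducts, disjoint_left, mem_image, mem_range]
  rintro _ ⟨i, hi, rfl⟩ ⟨t, ht, hg⟩
  obtain ⟨hti, hit⟩ := skipProd_mem_Ioo_of_lt hx ht
  rw [hg, (hx.mul' hx).lt_iff_lt (show _ ≤ n by omega) (show _ ≤ n by omega)] at hti hit
  obtain rfl : i = t + 1 := by omega
  exact skipProd_ne_mul_self _ (hnc t (by omega) (t + 2) (by omega) (by omega)) hg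

lemma disjoint_adjacentProducts_skipProducts (hG : ∀ x y : G, ⁅x, y⁆ ∈ Subgroup.center G)
    (hx : StrictMonoOn x (Set.Iic n))
    (hnc : ∀ i ≤ n, ∀ j ≤ n, i ≠ j → ¬Commute (x i) (x j)) :
    Disjoint (adjacentProducts x n) (skipProducts x n) := by
  simp only [adjacentProducts, skipProducts, disjoint_left, mem_image, mem_biUnion, mem_range]
  rintro g ⟨j, hj, hg⟩ ⟨t, ht, rfl⟩
  have := (hx.mul' hx).lt_and_lt_of_mem_Ioo (show _ ≤ n by omega) (show _ ≤ n by omega)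
    (show _ ≤ n by omega) (show _ ≤ n by omega) (mem_Ioo_of_mem_pair hx hj hg)
    (skipProd_mem_Ioo_of_lt hx ht)
  rw [← mem_coe, coe_pair] at hg
  rcases (by omega : j = t ∨ j = t + 1) with rfl | rfl
  · exact skipProd_not_mem_left hG (hx (show _ ≤ n by omega) (show _ ≤ n by omega) (by omega))
      (hnc (j + 1) (by omega) (j + 2) (by omega) (by omega)) hg
  · exact skipProd_not_mem_right hG (hx (show _ ≤ n by omega) (show _ ≤ n by omega) (by omega))
      (hnc t (by omega) (t + 1) (by omega) (by omega)) hg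

theorem four_mul_le_card_image_mul_image (hG : ∀ x y : G, ⁅x, y⁆ ∈ Subgroup.center G)
    (hx : StrictMonoOn x (Set.Iic n))
    (hnc : ∀ i ≤ n, ∀ j ≤ n, i ≠ j → ¬Commute (x i) (x j)) :
    4 * n ≤ #((range (n + 1)).image x * (range (n + 1)).image x) := by
  have mul_mem : ∀ i ≤ n, ∀ j ≤ n, x i * x j ∈ (range (n + 1)).image x * (range (n + 1)).image x :=
    fun i hi j hj => mul_mem_mul (mem_image_of_mem x (mem_range.2 (by omega)))
      (mem_image_of_mem x (mem_range.2 (by omega)))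
  have hsub : squares x n ∪ adjacentProducts x n ∪ skipProducts x n ⊆
      (range (n + 1)).image x * (range (n + 1)).image x := by
    simp only [union_subset_iff, squares, adjacentProducts, skipProducts, image_subset_iff,
      biUnion_subset_iff_forall_subset, insert_subset_iff, singleton_subset_iff, mem_range]
    refine ⟨⟨fun i hi => mul_mem i (by omega) i (by omega), fun i hi =>
      ⟨mul_mem i (by omega) (i + 1) (by omega), mul_mem (i + 1) (by omega) i (by omega)⟩⟩,
      fun t ht => ?_⟩
    rcases skipProd_eq_or (x t) (x (t + 1)) (x (t + 2)) with h | h <;> rw [h]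
    · exact mul_mem (t + 2) (by omega) t (by omega)
    · exact mul_mem t (by omega) (t + 2) (by omega)
  calc 4 * n ≤ #(squares x n ∪ adjacentProducts x n ∪ skipProducts x n) := by
        rw [card_union_of_disjoint (disjoint_union_left.2 ⟨disjoint_squares_skipProducts hx hnc,
          disjoint_adjacentProducts_skipProducts hG hx hnc⟩),
          card_union_of_disjoint (disjoint_squares_adjacentProducts hx), card_squares hx,
          card_adjacentProducts hx hnc, card_skipProducts hG hx hnc]
        omega
    _ ≤ _ := card_le_card hsub

end Counting

/-- Proposition 2.2: a completely-non-abelian subset `S` of size `k` of an ordered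
nilpotent group of class 2 satisfies `|S²| ≥ 4k - 4`. -/
theorem stmt_1 {G : Type*} [Group G] [LinearOrder G]
    [CovariantClass G G (· * ·) (· < ·)]
    [CovariantClass G G (Function.swap (· * ·)) (· < ·)]
    (hG : ∀ x y : G, ⁅x, y⁆ ∈ Subgroup.center G)
    (S : Finset G)
    (hCNA : ∀ a ∈ S, ∀ b ∈ S, a ≠ b → a * b ≠ b * a) :
    4 * S.card - 4 ≤ (S * S).card := by
  classical
  rcases Nat.eq_zero_or_pos #S with hS | hS
  · simp [hS]
  obtain ⟨n, hn⟩ := Nat.exists_eq_add_one_of_ne_zero hS.ne'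
  obtain ⟨x, hx, rfl⟩ := exists_strictMonoOn_image_range hn
  have hmem : ∀ i ≤ n, x i ∈ (range (n + 1)).image x :=
    fun i hi => mem_image_of_mem x (mem_range.2 (by omega))
  have hnc : ∀ i ≤ n, ∀ j ≤ n, i ≠ j → ¬Commute (x i) (x j) := fun i hi j hj hij =>
    hCNA _ (hmem i hi) _ (hmem j hj) (hx.injOn.ne hi hj hij)
  rw [hn]
  have := four_mul_le_card_image_mul_image hG hx hnc
  omega
end

section
/- Let G be a torsion-free nilpotent group of class 2 and let a, b, c ∈ G with either ab = bac or ba = cab, where ab ≠ ba. Let S = {a, ac, ac², ..., ac^i, b, bc, bc², ..., bc^j} for non-negative integers i, j, where these k = i + j + 2 elements are distinct. Then |S²| = 3k - 2. -/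
/-!
Since `c` is a commutator it is central, so `S` is the union of two arithmetic progressions
`a, ac, …, acⁱ` and `b, bc, …, bcʲ` of ratio `c`, and `S²` is the union of the progressions
`a²·{1, …, c²ⁱ}`, `ab·{1, …, c^(i+j)}`, `ba·{1, …, c^(i+j)}` and `b²·{1, …, c²ʲ}`. As `ba = ab c^{±1}`,
the middle two merge into a single progression of length `i + j + 2`. The remaining three
progressions lie in different cosets of the centre: `a ≢ b` because `a` and `b` do not commute, and
`a² ≢ b²` because otherwise `b` would commute with `a²`, while `⁅b, a²⁆ = c^{±2} ≠ 1` since `G` is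
torsion-free. As `c` has infinite order their sizes add up to `(2i+1) + (i+j+2) + (2j+1) = 3k - 2`.
-/

open Pointwise Subgroup
open scoped commutatorElement

section Progression

variable {G : Type*} [Group G] [DecidableEq G]

def progression (x c : G) (n : ℕ) : Finset G :=
  (Finset.range n).image fun t => x * c ^ t

theorem card_progression {c : G} (hc : ¬IsOfFinOrder c) (x : G) (n : ℕ) :
    (progression x c n).card = n := by
  rw [progression, Finset.card_image_of_injective _ fun s t hst =>
    injective_pow_iff_not_isOfFinOrder.mpr hc (mul_left_cancel hst), Finset.card_range]

theorem progression_mul_progression {c y : G} (hy : Commute y c) (x : G) (m n : ℕ) :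
    progression x c (m + 1) * progression y c (n + 1) = progression (x * y) c (m + n + 1) := by
  have key (s t : ℕ) : x * c ^ s * (y * c ^ t) = x * y * c ^ (s + t) := by
    rw [pow_add, mul_assoc x, ← mul_assoc (c ^ s), ← (hy.pow_right s).eq]
    group
  ext g
  simp only [progression, Finset.mem_mul, Finset.mem_image, Finset.mem_range]
  constructor
  · rintro ⟨_, ⟨s, hs, rfl⟩, _, ⟨t, ht, rfl⟩, rfl⟩
    exact ⟨s + t, by omega, (key s t).symm⟩
  · rintro ⟨t, ht, rfl⟩
    refine ⟨_, ⟨min t m, by omega, rfl⟩, _, ⟨t - min t m, by omega, rfl⟩, ?_⟩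
    rw [key, Nat.add_sub_cancel' (min_le_left t m)]

theorem progression_union_progression_mul (x c : G) (n : ℕ) :
    progression x c (n + 1) ∪ progression (x * c) c (n + 1) = progression x c (n + 2) := by
  ext g
  simp only [progression, Finset.mem_union, Finset.mem_image, Finset.mem_range]
  constructor
  · rintro (⟨t, ht, rfl⟩ | ⟨t, ht, rfl⟩)
    · exact ⟨t, by omega, rfl⟩
    · exact ⟨t + 1, by omega, by rw [pow_succ', mul_assoc]⟩
  · rintro ⟨t, ht, rfl⟩
    rcases t with _ | t
    · exact Or.inl ⟨0, by omega, rfl⟩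
    · exact Or.inr ⟨t, by omega, by rw [pow_succ', mul_assoc]⟩

theorem disjoint_progression {H : Subgroup G} {c x y : G} (hc : c ∈ H)
    (hxy : (x : G ⧸ H) ≠ y) (m n : ℕ) :
    Disjoint (progression x c m) (progression y c n) := by
  rw [Finset.disjoint_left]
  rintro _ hg hg'
  simp only [progression, Finset.mem_image, Finset.mem_range] at hg hg'
  obtain ⟨s, -, rfl⟩ := hg
  obtain ⟨t, -, hst⟩ := hg'
  apply hxy
  rw [← QuotientGroup.mk_mul_of_mem x (pow_mem hc s), ← hst,
    QuotientGroup.mk_mul_of_mem y (pow_mem hc t)]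

end Progression

section CentreCosets

variable {G : Type*} [Group G]

theorem mk_ne_mk_of_not_commute {x y : G} (h : ¬Commute x y) :
    (x : G ⧸ center G) ≠ y := by
  intro hxy
  have hz := QuotientGroup.eq.mp hxy
  apply h
  rw [← mul_inv_cancel_left x y]
  exact (Commute.refl x).mul_right (mem_center_iff.mp hz x)

theorem mk_mul_self_ne_mk_mul_self {c x y : G} (hc : c ∈ center G) (hc2 : c ^ 2 ≠ 1)
    (hyx : y * x = x * y * c) : ((x * x : G) : G ⧸ center G) ≠ (y * y : G) := by
  intro h
  obtain ⟨z, hz, hyy⟩ : ∃ z ∈ center G, y * y = x * x * z :=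
    ⟨_, QuotientGroup.eq.mp h, by group⟩
  -- `y` commutes with `y * y = x * x * z`, and `z` is central
  have hcomm : y * x * x = x * x * y := by
    have : y * (y * y) = y * y * y := (mul_assoc y y y).symm
    rw [hyy, mul_assoc (x * x) z y, ← mem_center_iff.mp hz y] at this
    simp only [← mul_assoc] at this
    exact mul_right_cancel this
  have hcomm_sq : y * x * x = x * x * y * c ^ 2 := by
    calc y * x * x = x * y * (x * c) := by rw [hyx, mul_assoc (x * y), mem_center_iff.mp hc x]
      _ = x * (y * x) * c := by group
      _ = x * x * y * c ^ 2 := by rw [hyx, sq]; simp only [mul_assoc]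
  exact hc2 (mul_left_cancel (a := x * x * y) (by rw [mul_one, ← hcomm_sq, hcomm]))

end CentreCosets

variable {G : Type*} [Group G] [DecidableEq G] in
theorem card_sq_progression_union {c x y : G} (hc : c ∈ center G) (hinf : ¬IsOfFinOrder c)
    (hyx : y * x = x * y * c) (m n : ℕ) :
    ((progression x c (m + 1) ∪ progression y c (n + 1)) *
      (progression x c (m + 1) ∪ progression y c (n + 1))).card = 3 * (m + n + 2) - 2 := by
  have hcentral (g : G) : Commute g c := mem_center_iff.mp hc g
  have hxy : (x : G ⧸ center G) ≠ y := by
    refine mk_ne_mk_of_not_commute fun h => hinf ?_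
    rw [h.eq] at hyx
    exact mul_eq_left.mp hyx.symm ▸ IsOfFinOrder.one
  have hxx_xy : ((x * x : G) : G ⧸ center G) ≠ (x * y : G) := by
    rw [QuotientGroup.mk_mul, QuotientGroup.mk_mul]
    exact fun h => hxy (mul_left_cancel h)
  have hxy_yy : ((x * y : G) : G ⧸ center G) ≠ (y * y : G) := by
    rw [QuotientGroup.mk_mul, QuotientGroup.mk_mul]
    exact fun h => hxy (mul_right_cancel h)
  have hxx_yy : ((x * x : G) : G ⧸ center G) ≠ (y * y : G) :=
    mk_mul_self_ne_mk_mul_self hc (fun h => hinf (isOfFinOrder_iff_pow_eq_one.mpr ⟨2, two_pos, h⟩))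
      hyx
  rw [Finset.union_mul, Finset.mul_union, Finset.mul_union,
    progression_mul_progression (hcentral x), progression_mul_progression (hcentral y),
    progression_mul_progression (hcentral x), progression_mul_progression (hcentral y),
    hyx, Nat.add_comm n m, Finset.union_assoc, ← Finset.union_assoc (progression (x * y) c _),
    progression_union_progression_mul,
    Finset.card_union_of_disjoint (Finset.disjoint_union_right.mpr
      ⟨disjoint_progression hc hxx_xy _ _, disjoint_progression hc hxx_yy _ _⟩),
    Finset.card_union_of_disjoint (disjoint_progression hc hxy_yy _ _),
    card_progression hinf, card_progression hinf, card_progression hinf]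
  omega

theorem stmt_5_general {G : Type*} [Group G] [DecidableEq G]
    (hG : ∀ x y : G, ⁅x, y⁆ ∈ Subgroup.center G)
    (htf : ∀ (g : G) (n : ℕ), 0 < n → g ^ n = 1 → g = 1)
    (a b c : G) (hab : a * b ≠ b * a)
    (hcomm : a * b = b * a * c ∨ b * a = c * (a * b))
    (i j : ℕ)
    (S : Finset G)
    (hS : S = (Finset.range (i + 1)).image (fun t => a * c ^ t)
        ∪ (Finset.range (j + 1)).image (fun t => b * c ^ t)) :
    (S * S).card = 3 * (i + j + 2) - 2 := by
  have hc : c ∈ center G := by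
    rcases hcomm with h | h
    · convert hG a⁻¹ b⁻¹ using 1
      rw [commutatorElement_def, inv_inv, inv_inv]
      simp only [mul_assoc]
      rw [h]
      group
    · convert hG b a using 1
      rw [commutatorElement_def, mul_assoc (b * a), ← mul_inv_rev, h]
      group
  have hinf : ¬IsOfFinOrder c := by
    rw [isOfFinOrder_iff_pow_eq_one]
    rintro ⟨n, hn, hcn⟩
    obtain rfl := htf c n hn hcn
    simp only [mul_one, one_mul] at hcomm
    exact hcomm.elim hab (fun h => hab h.symm)
  change S = progression a c (i + 1) ∪ progression b c (j + 1) at hS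
  subst hS
  rcases hcomm with h | h
  · rw [Finset.union_comm, card_sq_progression_union hc hinf h]
    omega
  · exact card_sq_progression_union hc hinf (h.trans (mem_center_iff.mp hc _).symm) i j

/-- Example 3.1. -/
theorem stmt_5 {G : Type*} [Group G] [DecidableEq G]
    (hG : ∀ x y : G, ⁅x, y⁆ ∈ Subgroup.center G)
    (htf : ∀ (g : G) (n : ℕ), 0 < n → g ^ n = 1 → g = 1)
    (a b c : G) (hab : a * b ≠ b * a)
    (hcomm : a * b = b * a * c ∨ b * a = c * (a * b))
    (i j : ℕ)
    (S : Finset G)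
    (hS : S = (Finset.range (i + 1)).image (fun t => a * c ^ t)
        ∪ (Finset.range (j + 1)).image (fun t => b * c ^ t))
    (hcard : S.card = i + j + 2) :
    (S * S).card = 3 * (i + j + 2) - 2 :=
  stmt_5_general hG htf a b c hab hcomm i j S hS
end

section
/- Let G be a torsion-free nilpotent group of class 2 and let S be a subset of size k ≥ 4 with ⟨S⟩ non-abelian. Suppose |S²| = 3k - 2 and S = T ∪ {x} where ⟨T⟩ is abelian and |T| = k - 1. Then S = {a, ac, ..., ac^{k-2}, b} for some a, b, c ∈ G with c ≠ 1 and either ba = abc or ab = bac; moreover c ∈ Z(G). -/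
/-!
Write `τ` for conjugation by `x`. As commutators are central, `⁅x, ·⁆` is a homomorphism and
`τ g = ⁅x, g⁆ * g`. The square `S * S` contains the pairwise disjoint pieces `(T ∪ τ T) * x`,
`{x * x}` and `T * T`, because neither `x` nor `x * x` lies in the abelian group `⟨T⟩`.
Torsion-freeness gives `|T ∪ τ T| ≥ |T| + 1` (otherwise `τ` permutes `T`, so every `⁅x, t⁆` has
finite order) and, by Cauchy–Davenport, `|T * T| ≥ 2 |T| - 1`; so `|S * S| = 3k - 2` forces
equality in both. Equality in Cauchy–Davenport inside the finitely generated torsion-free abelian,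
hence orderable, group `⟨T⟩` makes `T` a progression `a c^i`. Finally `T` and `τ T` share
`|T| - 1 ≥ 2` points, which forces `τ c = c`, and then `τ T = ⁅x, a⁆ T` with `⁅x, a⁆ = c^(±1)`.
-/

open Pointwise Finset Subgroup
open scoped commutatorElement

section LinearOrderedCommGroup

variable {α : Type*} [CommGroup α] [LinearOrder α] [IsOrderedMonoid α]

theorem StrictMonoOn.mul_lt_mul_of_add_lt {g : ℕ → α} {m : ℕ} (hg : StrictMonoOn g (Set.Iic m))
    {p q p' q' : ℕ} (hp : p ≤ p') (hq : q ≤ q') (hpq : p + q < p' + q') (hp' : p' ≤ m)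
    (hq' : q' ≤ m) : g p * g q < g p' * g q' := by
  have hmem {i : ℕ} (hi : i ≤ m) : i ∈ Set.Iic m := hi
  rcases hp.lt_or_eq with hp | rfl
  · exact mul_lt_mul_of_lt_of_le (hg (hmem (by omega)) (hmem hp') hp)
      (hg.monotoneOn (hmem (by omega)) (hmem hq') hq)
  · exact mul_lt_mul_right (hg (hmem (by omega)) (hmem hq') (by omega)) _

theorem strictMonoOn_zigzag {g : ℕ → α} {m : ℕ} (hg : StrictMonoOn g (Set.Iic m)) :
    StrictMonoOn (fun j => g (j / 2) * g ((j + 1) / 2)) (Set.Iic (2 * m)) :=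
  strictMonoOn_Iic_of_lt_succ fun j hj => by
    rw [Order.succ_eq_add_one]
    exact hg.mul_lt_mul_of_add_lt (by omega) (by omega) (by omega) (by omega) (by omega)

theorem Finset.exists_eq_image_pow_of_card_mul_self [DecidableEq α] {A : Finset α} (hA : 2 ≤ #A)
    (hAA : #(A * A) = 2 * #A - 1) :
    ∃ a d : α, d ≠ 1 ∧ A = (range #A).image fun i => a * d ^ i := by
  obtain ⟨m, hm⟩ : ∃ m, #A = m + 1 := ⟨#A - 1, by omega⟩
  set g : ℕ → α := fun i => A.orderEmbOfFin hm ⟨min i m, by omega⟩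
  have hg : StrictMonoOn g (Set.Iic m) := fun i hi j hj hij =>
    (A.orderEmbOfFin hm).strictMono (Fin.mk_lt_mk.2 (by rw [Set.mem_Iic] at hi hj; omega))
  have hgA (i : ℕ) : g i ∈ A := A.orderEmbOfFin_mem hm _
  have hA_eq : A = (range (m + 1)).image g := by
    refine eq_of_subset_of_card_le (fun t ht => ?_) (card_image_le.trans (by simp [hm]))
    obtain ⟨i, rfl⟩ : t ∈ Set.range (A.orderEmbOfFin hm) := by
      rw [range_orderEmbOfFin]; exact ht
    exact mem_image.2 ⟨i, mem_range.2 i.2, by simp [g, Nat.min_eq_left (Nat.le_of_lt_succ i.2)]⟩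
  set z : ℕ → α := fun j => g (j / 2) * g ((j + 1) / 2)
  have hz : StrictMonoOn z (Set.Iic (2 * m)) := strictMonoOn_zigzag hg
  have hAA_eq : (range (2 * m + 1)).image z = A * A := by
    refine eq_of_subset_of_card_le (image_subset_iff.2 fun j _ => mul_mem_mul (hgA _) (hgA _)) ?_
    rw [card_image_of_injOn (hz.injOn.mono fun j hj =>
      Set.mem_Iic.2 (by rw [coe_range, Set.mem_Iio] at hj; omega)), card_range, hAA,
      hm]
    omega
  -- `z` enumerates `A * A` increasingly, and `g i * g (i + 2)` lies strictly between
  -- `z (2i + 1) = g i * g (i + 1)` and `z (2i + 3) = g (i + 1) * g (i + 2)`: it is `z (2i + 2)`.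
  have hsq (i : ℕ) (hi : i + 2 ≤ m) : g i * g (i + 2) = g (i + 1) * g (i + 1) := by
    obtain ⟨j, hj, hzj⟩ := mem_image.1 (hAA_eq ▸ mul_mem_mul (hgA i) (hgA (i + 2)))
    rw [mem_range] at hj
    have hlo : z (2 * i + 1) < z j :=
      hzj ▸ hg.mul_lt_mul_of_add_lt (by omega) (by omega) (by omega) (by omega) (by omega)
    have hhi : z j < z (2 * i + 3) :=
      hzj ▸ hg.mul_lt_mul_of_add_lt (by omega) (by omega) (by omega) (by omega) (by omega)
    rw [hz.lt_iff_lt (Set.mem_Iic.2 (by omega)) (Set.mem_Iic.2 (by omega))] at hlo hhi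
    rw [← hzj, show j = 2 * i + 2 by omega]
    simp only [z]
    congr 2 <;> omega
  set d := (g 0)⁻¹ * g 1
  have hstep (i : ℕ) (hi : i + 1 ≤ m) : g (i + 1) = g i * d := by
    induction i with
    | zero => simp [d]
    | succ i ih =>
      have h := hsq i hi
      rw [ih (by omega)] at h ⊢
      apply mul_left_cancel (a := g i)
      rw [h]
      simp only [mul_comm, mul_left_comm]
  have hpow (i : ℕ) (hi : i ≤ m) : g i = g 0 * d ^ i := by
    induction i with
    | zero => simp
    | succ i ih => rw [hstep i hi, ih (by omega), pow_succ, mul_assoc]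
  refine ⟨g 0, d, inv_mul_eq_one.not.2 (hg (Set.mem_Iic.2 (Nat.zero_le m))
    (Set.mem_Iic.2 (by omega)) Nat.one_pos).ne, ?_⟩
  rw [hm]
  exact hA_eq.trans (image_congr fun i hi => hpow i (by rw [coe_range, Set.mem_Iio] at hi; omega))

end LinearOrderedCommGroup

theorem CommGroup.exists_linearOrder_isOrderedMonoid (H : Type*) [CommGroup H] [Group.FG H]
    [IsMulTorsionFree H] : ∃ _ : LinearOrder H, IsOrderedMonoid H := by
  obtain ⟨n, b⟩ := Module.basisOfFiniteTypeTorsionFree' (R := ℤ) (M := Additive H)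
  let φ : H → Multiplicative (Lex (Fin n →₀ ℤ)) := fun h =>
    .ofAdd (toLex (b.repr (.ofMul h)))
  have hφ : Function.Injective φ := fun u v h => by simpa [φ] using h
  let _ : LinearOrder H := LinearOrder.lift' φ hφ
  exact ⟨‹_›, Function.Injective.isOrderedMonoid φ (fun u v => by simp [φ]) Iff.rfl⟩

theorem Int.eq_one_or_eq_neg_one_of_card_Ico_union_Ico {n : ℕ} (hn : 2 ≤ n) {r : ℤ}
    (h : #(Ico (0 : ℤ) n ∪ Ico r (r + n)) = n + 1) : r = 1 ∨ r = -1 := by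
  have hinter : Ico (0 : ℤ) n ∩ Ico r (r + n) = Ico (max 0 r) (min n (r + n)) := by
    ext; simp only [mem_inter, mem_Ico]; omega
  have := card_union_add_card_inter (Ico (0 : ℤ) n) (Ico r (r + n))
  rw [h, hinter, Int.card_Ico, Int.card_Ico, Int.card_Ico] at this
  omega

section Group

variable {G : Type*} [Group G]

theorem commutatorElement_mul_right_of_forall_mem_center
    (hG : ∀ x y : G, ⁅x, y⁆ ∈ center G) (x g h : G) : ⁅x, g * h⁆ = ⁅x, g⁆ * ⁅x, h⁆ := by
  have hcomm : g⁻¹ * ⁅x, h⁆ = ⁅x, h⁆ * g⁻¹ := mem_center_iff.1 (hG x h) g⁻¹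
  calc ⁅x, g * h⁆ = x * g * x⁻¹ * (⁅x, h⁆ * g⁻¹) := by
        simp only [commutatorElement_def]; group
    _ = ⁅x, g⁆ * ⁅x, h⁆ := by rw [← hcomm, commutatorElement_def x g]; group

def commutatorElementHom (hG : ∀ x y : G, ⁅x, y⁆ ∈ center G) (x : G) : G →* G :=
  MonoidHom.mk' (⁅x, ·⁆) (commutatorElement_mul_right_of_forall_mem_center hG x)

@[simp]
theorem commutatorElementHom_apply (hG : ∀ x y : G, ⁅x, y⁆ ∈ center G) (x g : G) :
    commutatorElementHom hG x g = ⁅x, g⁆ := rfl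

theorem commutatorElement_eq_one_of_mem_center {x z : G} (hz : z ∈ center G) : ⁅x, z⁆ = 1 :=
  commutatorElement_eq_one_iff_mul_comm.2 (mem_center_iff.1 hz x)

theorem commutatorElement_pow_left_of_forall_mem_center (hG : ∀ x y : G, ⁅x, y⁆ ∈ center G)
    (x y : G) (n : ℕ) : ⁅x ^ n, y⁆ = ⁅x, y⁆ ^ n := by
  rw [← commutatorElement_inv, ← commutatorElementHom_apply hG y, map_pow,
    commutatorElementHom_apply, ← inv_pow, commutatorElement_inv]

theorem mul_eq_mul_mul_commutatorElement {g h : G} (hc : ⁅g, h⁆ ∈ center G) :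
    g * h = h * g * ⁅g, h⁆ :=
  calc g * h = ⁅g, h⁆ * (h * g) := by rw [commutatorElement_def]; group
    _ = h * g * ⁅g, h⁆ := (mem_center_iff.1 hc _).symm

theorem commutatorElement_eq_one_of_zpow_eq_conj (hG : ∀ x y : G, ⁅x, y⁆ ∈ center G)
    (htf : ∀ g : G, IsOfFinOrder g → g = 1) {x c : G} {p q : ℤ} (hp : p ≠ 0)
    (h : c ^ p = MulAut.conj x (c ^ q)) : ⁅x, c⁆ = 1 := by
  have hpq : c ^ (p - q) = ⁅x, c⁆ ^ q := by
    rw [zpow_sub, h, conj_eq_commutatorElement_mul, ← commutatorElementHom_apply hG, map_zpow,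
      commutatorElementHom_apply, mul_inv_cancel_right]
  have hw : ⁅x, c⁆ ^ (p - q) = 1 := by
    rw [← commutatorElementHom_apply hG, ← map_zpow, hpq, commutatorElementHom_apply,
      commutatorElement_eq_one_of_mem_center (zpow_mem (hG x c) q)]
  refine htf _ (isOfFinOrder_iff_zpow_eq_one.2 ?_)
  by_cases hpq' : p = q
  · subst hpq'
    exact ⟨p, hp, by rw [← hpq, sub_self, zpow_zero]⟩
  · exact ⟨p - q, sub_ne_zero.2 hpq', hw⟩

theorem cauchy_davenport_of_isOfFinOrder_eq_one [DecidableEq G]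
    (htf : ∀ g : G, IsOfFinOrder g → g = 1) {s t : Finset G} (hs : s.Nonempty)
    (ht : t.Nonempty) : #s + #t - 1 ≤ #(s * t) := by
  have htop : Monoid.minOrder G = ⊤ :=
    top_unique (Monoid.le_minOrder.2 fun a ha hfin => (ha (htf a hfin)).elim)
  simpa only [htop, min_eq_right, le_top, Nat.cast_le] using cauchy_davenport_minOrder_mul hs ht

open scoped IsMulCommutative in
theorem Finset.exists_eq_image_pow_of_card_mul_self_of_commute [DecidableEq G]
    (htf : ∀ g : G, IsOfFinOrder g → g = 1) {T : Finset G}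
    (hT : ∀ u ∈ T, ∀ v ∈ T, u * v = v * u) (hcard : 2 ≤ #T) (hTT : #(T * T) = 2 * #T - 1) :
    ∃ a c : G, c ≠ 1 ∧ T = (range #T).image fun i => a * c ^ i := by
  classical
  let H := closure (T : Set G)
  have := isMulCommutative_closure hT
  have : IsMulTorsionFree H := .of_not_isOfFinOrder fun h h1 hfin =>
    h1 (Subtype.ext (htf _ (Submonoid.isOfFinOrder_coe.2 hfin)))
  obtain ⟨_, _⟩ := CommGroup.exists_linearOrder_isOrderedMonoid H
  set A : Finset H := T.subtype (· ∈ H)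
  have hTA : T = A.image H.subtype := by
    have hTH : ∀ t ∈ T, t ∈ H := fun t ht => Subgroup.subset_closure ht
    simpa [map_eq_image] using (subtype_map_of_mem hTH).symm
  have hA : #A = #T := by rw [hTA, card_image_of_injective _ H.subtype_injective]
  have hAA : #(A * A) = #(T * T) := by
    rw [hTA, ← image_mul, card_image_of_injective _ H.subtype_injective]
  obtain ⟨a, d, hd, hAd⟩ := A.exists_eq_image_pow_of_card_mul_self (hA ▸ hcard) (by omega)
  refine ⟨a, d, by simpa using hd, ?_⟩
  calc T = A.image H.subtype := hTA
    _ = (range #T).image fun i => (a : G) * d ^ i := by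
      rw [hAd, image_image, hA]
      rfl

theorem exists_commutatorElement_ne_one {x : G} {T : Set G}
    (hT : ∀ u ∈ T, ∀ v ∈ T, u * v = v * u)
    (hS : ¬ ∀ u ∈ closure (insert x T), ∀ v ∈ closure (insert x T), u * v = v * u) :
    ∃ t ∈ T, ⁅x, t⁆ ≠ 1 := by
  by_contra! hx
  simp only [commutatorElement_eq_one_iff_mul_comm] at hx
  refine hS fun u hu v hv => Set.centralizer_centralizer_comm_of_comm ?_ u
    (closure_le_centralizer_centralizer _ hu) v (closure_le_centralizer_centralizer _ hv)
  rintro a (rfl | ha) b (rfl | hb)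
  exacts [rfl, hx b hb, (hx a ha).symm, hT a ha b hb]

theorem mul_self_notMem_closure (hG : ∀ x y : G, ⁅x, y⁆ ∈ center G)
    (htf : ∀ g : G, IsOfFinOrder g → g = 1) {x t : G} {T : Set G}
    (hT : ∀ u ∈ closure T, ∀ v ∈ closure T, u * v = v * u) (ht : t ∈ T) (hxt : ⁅x, t⁆ ≠ 1) :
    x * x ∉ closure T := fun hxx => hxt <| htf _ <| isOfFinOrder_iff_pow_eq_one.2
  ⟨2, two_pos, by rw [← commutatorElement_pow_left_of_forall_mem_center hG, sq,
    commutatorElement_eq_one_iff_mul_comm.2 (hT _ hxx _ (subset_closure ht))]⟩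

theorem Finset.card_lt_card_union_image_conj [DecidableEq G]
    (hG : ∀ x y : G, ⁅x, y⁆ ∈ center G) (htf : ∀ g : G, IsOfFinOrder g → g = 1) {x t : G}
    {T : Finset G} (ht : t ∈ T) (hxt : ⁅x, t⁆ ≠ 1) :
    #T < #(T ∪ T.image (MulAut.conj x)) := by
  refine card_lt_card (ssubset_iff_subset_ne.2 ⟨subset_union_left, fun hT => ?_⟩)
  have hconj : ∀ s ∈ T, MulAut.conj x s ∈ T := fun s hs =>
    union_eq_left.1 hT.symm (mem_image_of_mem _ hs)
  have hmem (n : ℕ) : ⁅x, t⁆ ^ n * t ∈ T := by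
    rw [← commutatorElement_pow_left_of_forall_mem_center hG, ← conj_eq_commutatorElement_mul,
      map_pow]
    induction n with
    | zero => simpa using ht
    | succ n ih => rw [pow_succ', MulAut.mul_apply]; exact hconj _ ih
  have hinj : Function.Injective fun n : ℕ => ⁅x, t⁆ ^ n * t :=
    (mul_left_injective t).comp
      (injective_pow_iff_not_isOfFinOrder.2 fun hfin => hxt (htf _ hfin))
  exact T.finite_toSet.not_infinite (Set.infinite_of_injective_forall_mem hinj hmem)

theorem Finset.card_union_image_conj_add_le_card_mul_self_insert [DecidableEq G] {x : G}
    {T : Finset G} (hx : x ∉ closure (T : Set G)) (hxx : x * x ∉ closure (T : Set G)) :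
    #(T ∪ T.image (MulAut.conj x)) + 1 + #(T * T) ≤ #(insert x T * insert x T) := by
  have hTT : ∀ g ∈ T * T, g ∈ closure (T : Set G) := by
    simp only [mem_mul]
    rintro _ ⟨u, hu, v, hv, rfl⟩
    exact mul_mem (subset_closure hu) (subset_closure hv)
  set U := (T ∪ T.image (MulAut.conj x)).image (· * x)
  have hU : ∀ g ∈ U, ∃ t ∈ T, g = t * x ∨ g = x * t := by
    simp only [U, mem_image, mem_union, MulAut.conj_apply]
    rintro _ ⟨_, ht | ⟨t, ht, rfl⟩, rfl⟩
    exacts [⟨_, ht, .inl rfl⟩, ⟨t, ht, .inr (inv_mul_cancel_right _ _)⟩]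
  have hdisj : Disjoint U (T * T) := disjoint_left.2 fun g hg hgT => by
    obtain ⟨t, ht, rfl | rfl⟩ := hU g hg
    · exact hx ((mul_mem_cancel_left (subset_closure ht)).1 (hTT _ hgT))
    · exact hx ((mul_mem_cancel_right (subset_closure ht)).1 (hTT _ hgT))
  have hxxU : x * x ∉ U ∪ T * T := by
    rw [mem_union, not_or]
    refine ⟨fun hxxU => ?_, fun hxxT => hxx (hTT _ hxxT)⟩
    obtain ⟨t, ht, h | h⟩ := hU _ hxxU
    · exact hx (mul_right_cancel h ▸ subset_closure ht)
    · exact hx (mul_left_cancel h ▸ subset_closure ht)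
  have hsub : insert (x * x) (U ∪ T * T) ⊆ insert x T * insert x T := by
    refine insert_subset (mul_mem_mul (mem_insert_self _ _) (mem_insert_self _ _))
      (union_subset (fun g hg => ?_) (mul_subset_mul (subset_insert _ _) (subset_insert _ _)))
    obtain ⟨t, ht, rfl | rfl⟩ := hU g hg
    · exact mul_mem_mul (mem_insert_of_mem ht) (mem_insert_self _ _)
    · exact mul_mem_mul (mem_insert_self _ _) (mem_insert_of_mem ht)
  calc #(T ∪ T.image (MulAut.conj x)) + 1 + #(T * T) = #(insert (x * x) (U ∪ T * T)) := by
        rw [card_insert_of_notMem hxxU, card_union_of_disjoint hdisj,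
          card_image_of_injective _ (mul_left_injective x)]
        ring
    _ ≤ #(insert x T * insert x T) := card_le_card hsub

theorem commutatorElement_eq_or_eq_inv_of_card_union_image_conj [DecidableEq G]
    (hG : ∀ x y : G, ⁅x, y⁆ ∈ center G) (htf : ∀ g : G, IsOfFinOrder g → g = 1)
    {x a c : G} (hc : c ≠ 1) {n : ℕ} (hn : 3 ≤ n) {T : Finset G}
    (hT : T = (range n).image fun i => a * c ^ i)
    (hcard : #(T ∪ T.image (MulAut.conj x)) = n + 1) : ⁅x, a⁆ = c ∨ ⁅x, a⁆ = c⁻¹ := by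
  set f : ℤ → G := fun i => a * c ^ i
  have hf : Function.Injective f := (mul_right_injective a).comp
    (injective_zpow_iff_not_isOfFinOrder.2 fun hfin => hc (htf c hfin))
  have hTf : T = (Ico 0 (n : ℤ)).image f := by
    ext g
    simp only [hT, f, mem_image, mem_range, mem_Ico]
    constructor
    · rintro ⟨i, hi, rfl⟩
      exact ⟨i, ⟨by omega, by omega⟩, zpow_natCast c i ▸ rfl⟩
    · rintro ⟨i, ⟨hi0, hi⟩, rfl⟩
      lift i to ℕ using hi0
      exact ⟨i, by omega, zpow_natCast c i ▸ rfl⟩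
  have hTcard : #T = n := by rw [hTf, card_image_of_injective _ hf, Int.card_Ico]; omega
  have hinter : 1 < #(T ∩ T.image (MulAut.conj x)) := by
    have := card_union_add_card_inter T (T.image (MulAut.conj x))
    rw [card_image_of_injective _ (MulAut.conj x).injective, hcard, hTcard] at this
    omega
  have hxc : ⁅x, c⁆ = 1 := by
    obtain ⟨u, hu, v, hv, huv⟩ := one_lt_card.1 hinter
    simp only [mem_inter, hTf, mem_image] at hu hv
    obtain ⟨⟨i, -, rfl⟩, _, ⟨j, -, rfl⟩, hj⟩ := hu
    obtain ⟨⟨i', -, rfl⟩, _, ⟨j', -, rfl⟩, hj'⟩ := hv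
    refine commutatorElement_eq_one_of_zpow_eq_conj hG htf (p := i' - i) (q := j' - j)
      (sub_ne_zero.2 fun h => huv (h ▸ rfl)) ?_
    calc c ^ (i' - i) = (f i)⁻¹ * f i' := by simp only [f]; group
      _ = (MulAut.conj x (f j))⁻¹ * MulAut.conj x (f j') := by rw [hj, hj']
      _ = MulAut.conj x ((f j)⁻¹ * f j') := by rw [← map_inv, ← map_mul]
      _ = MulAut.conj x (c ^ (j' - j)) := by simp only [f]; group
  have hconj (i : ℤ) : MulAut.conj x (f i) = ⁅x, a⁆ * f i := by
    rw [conj_eq_commutatorElement_mul, ← commutatorElementHom_apply hG, map_mul, map_zpow,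
      commutatorElementHom_apply, commutatorElementHom_apply, hxc, one_zpow, mul_one]
  have hcomm : a * ⁅x, a⁆ = ⁅x, a⁆ * a := mem_center_iff.1 (hG x a) a
  obtain ⟨r, hr⟩ : ∃ r : ℤ, ⁅x, a⁆ = c ^ r := by
    obtain ⟨u, hu⟩ := card_pos.1 (by omega : 0 < #(T ∩ T.image (MulAut.conj x)))
    simp only [mem_inter, hTf, mem_image] at hu
    obtain ⟨⟨i, -, rfl⟩, _, ⟨j, -, rfl⟩, hj⟩ := hu
    rw [hconj] at hj
    refine ⟨i - j, ?_⟩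
    calc ⁅x, a⁆ = a⁻¹ * (a * ⁅x, a⁆ * c ^ j) * c ^ (-j) := by group
      _ = a⁻¹ * (⁅x, a⁆ * (a * c ^ j)) * c ^ (-j) := by rw [hcomm]; group
      _ = c ^ (i - j) := by rw [hj]; simp only [f]; group
  have hconjT : T.image (MulAut.conj x) = (Ico r (r + n)).image f := by
    have hshift : (Ico 0 (n : ℤ)).image (r + ·) = Ico r (r + n) := by
      rw [image_add_left_Ico, add_zero]
    rw [hTf, image_image, ← hshift, image_image]
    refine image_congr fun i _ => ?_
    simp only [Function.comp_apply, hconj, f, hr, zpow_add, ← mul_assoc]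
    rw [← hr, hcomm]
  have hunion : #(Ico 0 (n : ℤ) ∪ Ico r (r + n)) = n + 1 := by
    rw [← card_image_of_injective _ hf, image_union, ← hTf, ← hconjT, hcard]
  rcases Int.eq_one_or_eq_neg_one_of_card_Ico_union_Ico (by omega) hunion with rfl | rfl
  · exact .inl (hr.trans (zpow_one c))
  · exact .inr (hr.trans (zpow_neg_one c))

end Group

theorem stmt_7_general {G : Type*} [Group G] [DecidableEq G]
    (hG : ∀ x y : G, ⁅x, y⁆ ∈ Subgroup.center G)
    (htf : ∀ (g : G) (n : ℕ), 0 < n → g ^ n = 1 → g = 1)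
    (k : ℕ) (hk : 4 ≤ k)
    (T : Finset G) (x : G) (hT : T.card = k - 1)
    (S : Finset G) (hS : S = insert x T)
    (hTab : ∀ u ∈ Subgroup.closure (T : Set G), ∀ v ∈ Subgroup.closure (T : Set G),
      u * v = v * u)
    (hSnab : ¬ ∀ u ∈ Subgroup.closure (S : Set G), ∀ v ∈ Subgroup.closure (S : Set G),
      u * v = v * u)
    (hScard : (S * S).card = 3 * k - 2) :
    ∃ a b c : G, c ≠ 1 ∧ c ∈ Subgroup.center G ∧
      (b * a = a * b * c ∨ a * b = b * a * c) ∧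
      S = insert b ((Finset.range (k - 1)).image (fun t => a * c ^ t)) := by
  have htf' : ∀ g : G, IsOfFinOrder g → g = 1 := fun g hg =>
    let ⟨n, hn, h⟩ := hg.exists_pow_eq_one; htf g n hn h
  have hTcomm : ∀ u ∈ T, ∀ v ∈ T, u * v = v * u := fun u hu v hv =>
    hTab u (subset_closure hu) v (subset_closure hv)
  obtain ⟨t, ht, hxt⟩ := exists_commutatorElement_ne_one hTcomm (by rwa [hS, coe_insert] at hSnab)
  have hxT : x ∉ closure (T : Set G) := fun hxT =>
    hxt (commutatorElement_eq_one_iff_mul_comm.2 (hTab x hxT t (subset_closure ht)))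
  have hTT := cauchy_davenport_of_isOfFinOrder_eq_one htf' ⟨t, ht⟩ ⟨t, ht⟩
  have hU := card_lt_card_union_image_conj hG htf' ht hxt
  have hSS := card_union_image_conj_add_le_card_mul_self_insert hxT
    (mul_self_notMem_closure hG htf' hTab ht hxt)
  rw [← hS] at hSS
  obtain ⟨a, c, hc, hTac⟩ :=
    exists_eq_image_pow_of_card_mul_self_of_commute htf' hTcomm (by omega) (by omega)
  have hxa := commutatorElement_eq_or_eq_inv_of_card_union_image_conj hG htf' (x := x) hc
    (by omega) hTac (by omega)
  refine ⟨a, x, c, hc, ?_, ?_, by rw [hS, hTac, hT]⟩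
  · rcases hxa with h | h
    · exact h ▸ hG x a
    · exact inv_inv c ▸ h ▸ inv_mem (hG x a)
  · rcases hxa with h | h
    · exact .inl (h ▸ mul_eq_mul_mul_commutatorElement (hG x a))
    · rw [← inv_eq_iff_eq_inv, commutatorElement_inv] at h
      exact .inr (h ▸ mul_eq_mul_mul_commutatorElement (hG a x))

/-- Proposition 3.4. -/
theorem stmt_7 {G : Type*} [Group G] [DecidableEq G]
    (hG : ∀ x y : G, ⁅x, y⁆ ∈ Subgroup.center G)
    (htf : ∀ (g : G) (n : ℕ), 0 < n → g ^ n = 1 → g = 1)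
    (k : ℕ) (hk : 4 ≤ k)
    (T : Finset G) (x : G) (hx : x ∉ T) (hT : T.card = k - 1)
    (S : Finset G) (hS : S = insert x T)
    (hTab : ∀ u ∈ Subgroup.closure (T : Set G), ∀ v ∈ Subgroup.closure (T : Set G),
      u * v = v * u)
    (hSnab : ¬ ∀ u ∈ Subgroup.closure (S : Set G), ∀ v ∈ Subgroup.closure (S : Set G),
      u * v = v * u)
    (hScard : (S * S).card = 3 * k - 2) :
    ∃ a b c : G, c ≠ 1 ∧ c ∈ Subgroup.center G ∧
      (b * a = a * b * c ∨ a * b = b * a * c) ∧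
      S = insert b ((Finset.range (k - 1)).image (fun t => a * c ^ t)) :=
  stmt_7_general hG htf k hk T x hT S hS hTab hSnab hScard
end

section
/- Let (G, <) be an ordered group and let b ∈ G and T a finite subset of G with b ∉ C_G(T) (b fails to commute with some element of T). If ⟨T⟩ is abelian, then |bT ∪ Tb| ≥ |T| + 1. -/
/-!
Since `|bT| = |T|`, the bound can only fail if `Tb ⊆ bT`, i.e. if conjugation `t ↦ b⁻¹ t b` maps
the finite set `T` into itself. In an ordered group conjugation is strictly increasing, and a
strictly increasing self-map of a finite chain is the identity, so `b` would commute with every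
element of `T`.
-/

-- Composed with the increasing enumeration of `s`, `f` is again an increasing enumeration of `s`.
theorem Finset.apply_eq_self_of_strictMonoOn_of_mapsTo {α : Type*} [LinearOrder α]
    {s : Finset α} {f : α → α} (hf : StrictMonoOn f s) (hs : ∀ x ∈ s, f x ∈ s) {x : α}
    (hx : x ∈ s) : f x = x := by
  obtain ⟨i, rfl⟩ : x ∈ Set.range (s.orderEmbOfFin rfl) := by simpa using hx
  have hmem : ∀ j, s.orderEmbOfFin rfl j ∈ s := s.orderEmbOfFin_mem rfl
  have hunique : f ∘ s.orderEmbOfFin rfl = s.orderEmbOfFin rfl :=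
    orderEmbOfFin_unique rfl (fun j => hs _ (hmem j))
      fun _ _ hjk => hf (hmem _) (hmem _) ((s.orderEmbOfFin rfl).strictMono hjk)
  exact congrFun hunique i

theorem strictMono_conj {G : Type*} [Group G] [LinearOrder G] [MulLeftStrictMono G]
    [MulRightStrictMono G] (b : G) : StrictMono fun t => b⁻¹ * t * b :=
  fun _ _ h => mul_lt_mul_left (mul_lt_mul_right h b⁻¹) b

theorem Finset.commute_of_image_mul_right_subset_image_mul_left {G : Type*} [Group G]
    [LinearOrder G] [MulLeftStrictMono G] [MulRightStrictMono G] {b t : G} {T : Finset G}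
    (h : T.image (· * b) ⊆ T.image (b * ·)) (ht : t ∈ T) : b * t = t * b := by
  have hmaps : ∀ x ∈ T, b⁻¹ * x * b ∈ T := by
    intro x hx
    obtain ⟨y, hy, hyx⟩ := mem_image.mp (h (mem_image_of_mem (· * b) hx))
    simpa [← hyx, mul_assoc] using hy
  have hfix := apply_eq_self_of_strictMonoOn_of_mapsTo ((strictMono_conj b).strictMonoOn _)
    hmaps ht
  nth_rewrite 1 [← hfix]
  group

theorem stmt_11_general {G : Type*} [Group G] [LinearOrder G]
    [CovariantClass G G (· * ·) (· < ·)]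
    [CovariantClass G G (Function.swap (· * ·)) (· < ·)]
    (b : G) (T : Finset G)
    (hb : ∃ t ∈ T, b * t ≠ t * b) :
    T.card + 1 ≤ (T.image (fun t => b * t) ∪ T.image (fun t => t * b)).card := by
  obtain ⟨t, ht, hbt⟩ := hb
  have hnot_subset : ¬ T.image (fun t => t * b) ⊆ T.image (fun t => b * t) :=
    fun h => hbt (Finset.commute_of_image_mul_right_subset_image_mul_left h ht)
  calc T.card + 1 = (T.image (fun t => b * t)).card + 1 := by
        rw [Finset.card_image_of_injective T (mul_right_injective b)]
    _ ≤ (T.image (fun t => b * t) ∪ T.image (fun t => t * b)).card :=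
        Finset.card_lt_card (left_lt_sup.mpr hnot_subset)

/-- Proposition 2.4 of [7]: in an ordered group, if `⟨T⟩` is abelian and `b` fails to
commute with some element of `T`, then `|bT ∪ Tb| ≥ |T| + 1`. -/
theorem stmt_11 {G : Type*} [Group G] [LinearOrder G]
    [CovariantClass G G (· * ·) (· < ·)]
    [CovariantClass G G (Function.swap (· * ·)) (· < ·)]
    (b : G) (T : Finset G)
    (hb : ∃ t ∈ T, b * t ≠ t * b)
    (hTab : ∀ u ∈ Subgroup.closure (T : Set G), ∀ v ∈ Subgroup.closure (T : Set G),
      u * v = v * u) :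
    T.card + 1 ≤ (T.image (fun t => b * t) ∪ T.image (fun t => t * b)).card :=
  stmt_11_general b T hb
end

section
/- Let G be an ordered nilpotent group of class 2 and let x, y, z ∈ G with x < y < z, where y and z commute (yz = zy) but x commutes with neither y nor z. If xz = zy and zx = yz, then a contradiction follows; that is, it is impossible that {xz, zx} = {yz, zy} as ordered pairs {xz = zy, zx = yz}. -/
open Pointwise
open scoped commutatorElement

/-!
The equations say `y = z⁻¹ x z = z x z⁻¹`, so `x` commutes with `z²`. In class 2 the
commutator is bilinear, hence `⁅x, z⁆² = ⁅x, z²⁆ = 1`; a bi-ordered group is torsion-free,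
so `⁅x, z⁆ = 1`.
-/

theorem commutatorElement_mul_right_of_mem_center {G : Type*} [Group G] {a b c : G}
    (h : ⁅a, c⁆ ∈ Subgroup.center G) : ⁅a, b * c⁆ = ⁅a, b⁆ * ⁅a, c⁆ := by
  rw [commutatorElement_mul_right_eq_mul_conj, mul_assoc _ b, Subgroup.mem_center_iff.mp h b,
    mul_assoc, mul_inv_cancel_right]

theorem commute_mul_self_of_mul_eq_mul_of_mul_eq_mul {G : Type*} [Monoid G] {x y z : G}
    (h1 : x * z = z * y) (h2 : z * x = y * z) : Commute x (z * z) := by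
  rw [Commute, SemiconjBy, ← mul_assoc, h1, mul_assoc, ← h2, mul_assoc]

theorem stmt_13_general {G : Type*} [Group G] [LinearOrder G]
    [CovariantClass G G (· * ·) (· < ·)]
    [CovariantClass G G (Function.swap (· * ·)) (· < ·)]
    (hG : ∀ x y : G, ⁅x, y⁆ ∈ Subgroup.center G)
    (x y z : G)
    (hncz : x * z ≠ z * x)
    (h1 : x * z = z * y) (h2 : z * x = y * z) :
    False := by
  have hsq : ⁅x, z⁆ ^ 2 = 1 := by
    rw [sq, ← commutatorElement_mul_right_of_mem_center (hG x z),
      commutatorElement_eq_one_iff_commute]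
    exact commute_mul_self_of_mul_eq_mul_of_mul_eq_mul h1 h2
  exact hncz (commutatorElement_eq_one_iff_mul_comm.mp (sq_eq_one.mp hsq))

/-- Final step of Lemma 2.1: with `x < y < z`, `yz = zy`, `x` commuting with neither
`y` nor `z`, the equations `xz = zy` and `zx = yz` are contradictory. -/
theorem stmt_13 {G : Type*} [Group G] [LinearOrder G]
    [CovariantClass G G (· * ·) (· < ·)]
    [CovariantClass G G (Function.swap (· * ·)) (· < ·)]
    (hG : ∀ x y : G, ⁅x, y⁆ ∈ Subgroup.center G)
    (x y z : G) (hxy : x < y) (hyz : y < z)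
    (hcomm : y * z = z * y)
    (hncy : x * y ≠ y * x) (hncz : x * z ≠ z * x)
    (h1 : x * z = z * y) (h2 : z * x = y * z) :
    False :=
  stmt_13_general hG x y z hncz h1 h2
end

section
/- Let G be an ordered nilpotent group of class 2, a, b, c ∈ G with c ∈ Z(G), c > 1, ab ≠ ba and either ba = abc or ba = abc⁻¹. Then for S = {a, ac, b, bc²}, one has |S²| = 11 = 3|S| - 1. -/
/-!
Write `S = a • {1, c} ∪ b • {1, c²}` and `ba = abcᵉ` with `ε = ±1`. As `c` is central, `S²` is the
union of `a² • {1, c, c²}`, `ab • ({1, …, c³} ∪ cᵉ • {1, …, c³})` and `b² • {1, c², c⁴}`.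
These pieces lie in distinct cosets of the center, since `a²` commutes with `a`, `b²` with `b`, while
`ab` commutes with neither and `b²` not with `a` (`b²a = ab²c²ᵉ`). In an ordered group `c` has
infinite order, so the pieces have `3`, `5` and `3` elements.
-/

open Pointwise Function
open scoped commutatorElement

namespace Finset

variable {G : Type*} [Group G] [DecidableEq G]

theorem mul_singleton_eq_singleton_mul {s : Finset G} {y : G} (h : ∀ x ∈ s, Commute x y) :
    s * {y} = {y} * s := by
  rw [mul_singleton, singleton_mul]
  exact image_congr fun x hx => (h x hx).eq

theorem smul_mul_smul_of_commute {s t : Finset G} {x y : G} (h : ∀ z ∈ s, Commute z y) :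
    x • s * y • t = (x * y) • (s * t) := by
  simp only [← singleton_smul, smul_eq_mul]
  rw [mul_assoc, ← mul_assoc s, mul_singleton_eq_singleton_mul h, mul_assoc, ← mul_assoc,
    singleton_mul_singleton]

theorem image_zpow_add (c : G) (s t : Finset ℤ) :
    (s + t).image (c ^ ·) = s.image (c ^ ·) * t.image (c ^ ·) :=
  image_image₂_distrib fun m n => zpow_add c m n

theorem mem_center_of_mem_image_zpow {c : G} (hc : c ∈ Subgroup.center G) (s : Finset ℤ) :
    ∀ u ∈ s.image (c ^ ·), u ∈ Subgroup.center G := by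
  simp only [mem_image, forall_exists_index, and_imp, forall_apply_eq_imp_iff₂]
  exact fun n _ => zpow_mem hc n

end Finset

open Finset

section

variable {G : Type*} [Group G]

theorem commute_mul_iff_of_mem_center {x y z : G} (hz : z ∈ Subgroup.center G) :
    Commute (x * z) y ↔ Commute x y := by
  have hcomm (w : G) (hw : w ∈ Subgroup.center G) : Commute w y :=
    (Subgroup.mem_center_iff.mp hw y).symm
  refine ⟨fun h => ?_, fun h => h.mul_left (hcomm z hz)⟩
  simpa using h.mul_left (hcomm z⁻¹ (inv_mem hz))

variable {a b c : G} {ε : ℤ}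

theorem not_commute_of_mul_eq_mul_zpow (hinj : Injective (c ^ · : ℤ → G)) (hε : ε ≠ 0)
    (hba : b * a = a * b * c ^ ε) : ¬Commute a b := fun h =>
  hε (hinj ((left_eq_mul.mp (h.eq.trans hba)).trans (zpow_zero c).symm))

theorem not_commute_mul_self_of_mul_eq_mul_zpow (hc : c ∈ Subgroup.center G)
    (hinj : Injective (c ^ · : ℤ → G)) (hε : ε ≠ 0) (hba : b * a = a * b * c ^ ε) :
    ¬Commute (b * b) a := by
  have hcb (x : G) : c ^ ε * (b * x) = b * (c ^ ε * x) := by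
    rw [← mul_assoc, ← Subgroup.mem_center_iff.mp (zpow_mem hc ε) b, mul_assoc]
  have hbba : b * b * a = a * (b * b) * c ^ (ε + ε) :=
    calc b * b * a = b * (a * b * c ^ ε) := by rw [mul_assoc, hba]
      _ = b * a * (b * c ^ ε) := by simp only [mul_assoc]
      _ = a * (b * b) * c ^ (ε + ε) := by rw [hba, zpow_add]; simp only [mul_assoc, hcb]
  intro h
  have h2ε : c ^ (ε + ε) = c ^ (0 : ℤ) :=
    (left_eq_mul.mp (h.eq.symm.trans hbba)).trans (zpow_zero c).symm
  exact hε (by linarith [hinj h2ε])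

variable [DecidableEq G]

theorem Finset.disjoint_smul_finset_of_commute {s t : Finset G} {x y z : G}
    (hs : ∀ u ∈ s, u ∈ Subgroup.center G) (ht : ∀ u ∈ t, u ∈ Subgroup.center G)
    (hx : Commute x z) (hy : ¬Commute y z) : Disjoint (x • s) (y • t) := by
  rw [disjoint_left]
  rintro _ hxu hyv
  obtain ⟨u, hu, rfl⟩ := mem_smul_finset.mp hxu
  obtain ⟨v, hv, hvu⟩ := mem_smul_finset.mp hyv
  rw [smul_eq_mul, smul_eq_mul] at hvu
  apply hy
  rw [← commute_mul_iff_of_mem_center (ht v hv), hvu, commute_mul_iff_of_mem_center (hs u hu)]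
  exact hx

theorem card_smul_image_zpow_union (hc : c ∈ Subgroup.center G)
    (hinj : Injective (c ^ · : ℤ → G)) (hab : ¬Commute a b) (I J : Finset ℤ) :
    (a • I.image (c ^ ·) ∪ b • J.image (c ^ ·)).card = I.card + J.card := by
  rw [card_union_of_disjoint (disjoint_smul_finset_of_commute (mem_center_of_mem_image_zpow hc I)
      (mem_center_of_mem_image_zpow hc J) (Commute.refl a) fun h => hab h.symm),
    card_smul_finset, card_smul_finset, card_image_of_injective _ hinj,
    card_image_of_injective _ hinj]

theorem smul_image_zpow_union_mul_self (hc : c ∈ Subgroup.center G)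
    (hba : b * a = a * b * c ^ ε) (I J : Finset ℤ) :
    (a • I.image (c ^ ·) ∪ b • J.image (c ^ ·)) * (a • I.image (c ^ ·) ∪ b • J.image (c ^ ·)) =
      (a * a) • (I + I).image (c ^ ·) ∪
        (a * b) • ((I + J) ∪ ({ε} + (I + J))).image (c ^ ·) ∪ (b * b) • (J + J).image (c ^ ·) := by
  have hcomm (K : Finset ℤ) (y : G) : ∀ z ∈ K.image (c ^ ·), Commute z y :=
    fun z hz => (Subgroup.mem_center_iff.mp (mem_center_of_mem_image_zpow hc K z hz) y).symm
  have hba_smul : (b * a) • (J + I).image (c ^ ·) = (a * b) • ({ε} + (I + J)).image (c ^ ·) := by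
    rw [hba, mul_smul, add_comm J, image_zpow_add c {ε}, image_singleton]
    congr 1
    rw [← singleton_smul, smul_eq_mul]
  rw [union_mul, mul_union, mul_union, smul_mul_smul_of_commute (hcomm I a),
    smul_mul_smul_of_commute (hcomm I b), smul_mul_smul_of_commute (hcomm J a),
    smul_mul_smul_of_commute (hcomm J b), ← image_zpow_add, ← image_zpow_add, ← image_zpow_add,
    ← image_zpow_add, hba_smul, image_union, smul_finset_union, union_assoc, union_assoc,
    union_assoc]

theorem card_smul_image_zpow_union_mul_self (hc : c ∈ Subgroup.center G)
    (hinj : Injective (c ^ · : ℤ → G)) (hε : ε ≠ 0) (hba : b * a = a * b * c ^ ε)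
    (I J : Finset ℤ) :
    ((a • I.image (c ^ ·) ∪ b • J.image (c ^ ·)) *
        (a • I.image (c ^ ·) ∪ b • J.image (c ^ ·))).card =
      (I + I).card + ((I + J) ∪ ({ε} + (I + J))).card + (J + J).card := by
  have hab := not_commute_of_mul_eq_mul_zpow hinj hε hba
  have hcen (K : Finset ℤ) := mem_center_of_mem_image_zpow hc K
  have haa : Commute (a * a) a := (Commute.refl a).mul_left (.refl a)
  rw [smul_image_zpow_union_mul_self hc hba, card_union_of_disjoint, card_union_of_disjoint,
    card_smul_finset, card_smul_finset, card_smul_finset, card_image_of_injective _ hinj,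
    card_image_of_injective _ hinj, card_image_of_injective _ hinj]
  · exact disjoint_smul_finset_of_commute (hcen _) (hcen _) haa
      (by rwa [(IsLeftRegular.all a).commute_mul_left_iff])
  · refine disjoint_union_left.mpr ⟨disjoint_smul_finset_of_commute (hcen _) (hcen _) haa
      (not_commute_mul_self_of_mul_eq_mul_zpow hc hinj hε hba),
      (disjoint_smul_finset_of_commute (hcen _) (hcen _) ((Commute.refl b).mul_left (.refl b))
        ?_).symm⟩
    rw [(IsRightRegular.all b).commute_mul_right_iff]
    exact fun h => hab h.symm

end

theorem stmt_14_general {G : Type*} [Group G] [LinearOrder G]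
    [CovariantClass G G (· * ·) (· < ·)]
    (a b c : G) (hc : c ∈ Subgroup.center G) (hc1 : 1 < c)
    (hba : b * a = a * b * c ∨ b * a = a * b * c⁻¹)
    (S : Finset G) (hS : S = {a, a * c, b, b * c ^ 2}) :
    (S * S).card = 11 ∧ (S * S).card = 3 * S.card - 1 := by
  have hinj : Injective (c ^ · : ℤ → G) := injective_zpow_iff_not_isOfFinOrder.mpr
    (not_isOfFinOrder_of_injective_pow (pow_right_strictMono' hc1).injective)
  obtain ⟨ε, hε, hba⟩ : ∃ ε : ℤ, (ε = 1 ∨ ε = -1) ∧ b * a = a * b * c ^ ε :=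
    hba.elim (fun h => ⟨1, .inl rfl, by rwa [zpow_one]⟩)
      fun h => ⟨-1, .inr rfl, by rwa [zpow_neg_one]⟩
  have hε0 : ε ≠ 0 := by omega
  have hS' : S = a • ({0, 1} : Finset ℤ).image (c ^ ·) ∪ b • ({0, 2} : Finset ℤ).image (c ^ ·) := by
    simp only [hS, image_insert, image_singleton, zpow_ofNat, pow_zero, pow_one,
      smul_finset_insert, smul_finset_singleton, smul_eq_mul, mul_one, insert_union,
      singleton_union]
  have hSS : (S * S).card = 11 := by
    rw [hS', card_smul_image_zpow_union_mul_self hc hinj hε0 hba]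
    rcases hε with rfl | rfl <;> decide
  have hS4 : S.card = 4 := by
    rw [hS', card_smul_image_zpow_union hc hinj (not_commute_of_mul_eq_mul_zpow hinj hε0 hba)]
    rfl
  exact ⟨hSS, by rw [hSS, hS4]⟩

/-- The excluded example: if `c ∈ Z(G)`, `c > 1`, `ab ≠ ba` and `ba = abc` or
`ba = abc⁻¹`, then `S = {a, ac, b, bc²}` has `|S²| = 11 = 3|S| - 1`. -/
theorem stmt_14 {G : Type*} [Group G] [LinearOrder G]
    [CovariantClass G G (· * ·) (· < ·)]
    [CovariantClass G G (Function.swap (· * ·)) (· < ·)]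
    (hG : ∀ x y : G, ⁅x, y⁆ ∈ Subgroup.center G)
    (a b c : G) (hc : c ∈ Subgroup.center G) (hc1 : 1 < c)
    (hab : a * b ≠ b * a)
    (hba : b * a = a * b * c ∨ b * a = a * b * c⁻¹)
    (S : Finset G) (hS : S = {a, a * c, b, b * c ^ 2}) :
    (S * S).card = 11 ∧ (S * S).card = 3 * S.card - 1 :=
  stmt_14_general a b c hc hc1 hba S hS
end

section
/- Let (G, <) be an ordered nilpotent group of class 2, and let T = {x_1, ..., x_{k-1}} with x_1 < ... < x_{k-1} generate an abelian subgroup, and let x_k > x_{k-1} with x_k ∉ C_G(T). Then S² = T² ∪ {x_k²} ∪ (x_kT ∪ Tx_k) is a disjoint union (the three pieces are pairwise disjoint), where S = T ∪ {x_k}. -/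
open Pointwise
open scoped commutatorElement

/-
The subgroup `H = ⟨T⟩` is abelian and `x_k` fails to commute with some `t ∈ T`,
so `x_k ∉ H`. In class 2 the commutator `[x_k, t]` is central, whence `[x_k², t] = [x_k, t]²`;
ordered groups are torsion-free, so `x_k²` does not commute with `t` either and `x_k² ∉ H`.
Now `T² ⊆ H`, while `x_k²`, `x_k T` and `T x_k` lie outside `H`, and `x_k² ∉ x_k T ∪ T x_k`
because `x_k ∉ T`.
-/

theorem commutatorElement_mul_self_left {G : Type*} [Group G] {a c : G}
    (h : ⁅a, c⁆ ∈ Subgroup.center G) : ⁅a * a, c⁆ = ⁅a, c⁆ ^ 2 := by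
  rw [commutatorElement_mul_left_eq_conj_mul, Subgroup.mem_center_iff.mp h a,
    mul_inv_cancel_right, sq]

theorem Commute.of_mul_self_left {G : Type*} [Group G] [IsMulTorsionFree G] {a c : G}
    (h : ⁅a, c⁆ ∈ Subgroup.center G) (hac : Commute (a * a) c) : Commute a c := by
  rw [← commutatorElement_eq_one_iff_commute, commutatorElement_mul_self_left h] at hac
  exact commutatorElement_eq_one_iff_commute.mp ((pow_eq_one_iff_left two_ne_zero).mp hac)

theorem Finset.insert_mul_insert_self {G : Type*} [Mul G] [DecidableEq G] (a : G)
    (T : Finset G) :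
    insert a T * insert a T =
      T * T ∪ {a * a} ∪ (T.image (fun t => a * t) ∪ T.image (fun t => t * a)) := by
  ext x
  simp only [Finset.mem_mul, Finset.mem_insert, Finset.mem_union, Finset.mem_singleton,
    Finset.mem_image]
  aesop

theorem stmt_15_general {G : Type*} [Group G] [LinearOrder G]
    [CovariantClass G G (· * ·) (· < ·)]
    [CovariantClass G G (Function.swap (· * ·)) (· < ·)]
    (hG : ∀ x y : G, ⁅x, y⁆ ∈ Subgroup.center G)
    (T : Finset G) (xk : G)
    (hTab : ∀ u ∈ Subgroup.closure (T : Set G), ∀ v ∈ Subgroup.closure (T : Set G),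
      u * v = v * u)
    (hnc : ∃ t ∈ T, xk * t ≠ t * xk)
    (S : Finset G) (hS : S = insert xk T) :
    S * S = (T * T) ∪ {xk * xk} ∪ (T.image (fun t => xk * t) ∪ T.image (fun t => t * xk)) ∧
    Disjoint (T * T) ({xk * xk} : Finset G) ∧
    Disjoint (T * T) (T.image (fun t => xk * t) ∪ T.image (fun t => t * xk)) ∧
    Disjoint ({xk * xk} : Finset G)
      (T.image (fun t => xk * t) ∪ T.image (fun t => t * xk)) := by
  obtain ⟨t, ht, hxt⟩ := hnc
  set H := Subgroup.closure (T : Set G)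
  have hTH : ∀ s ∈ T, s ∈ H := fun s hs => Subgroup.subset_closure hs
  have htH := hTH t ht
  have hxH : xk ∉ H := fun hx => hxt (hTab _ hx _ htH)
  have hxxH : xk * xk ∉ H := fun hx =>
    hxt (Commute.of_mul_self_left (hG xk t) (hTab _ hx _ htH))
  have hTT : ∀ y ∈ T * T, y ∈ H := by
    simp only [Finset.mem_mul]
    rintro _ ⟨a, ha, b, hb, rfl⟩
    exact mul_mem (hTH a ha) (hTH b hb)
  have hxT : ∀ y ∈ T.image (fun t => xk * t) ∪ T.image (fun t => t * xk), y ∉ H := by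
    simp only [Finset.mem_union, Finset.mem_image]
    rintro _ (⟨s, hs, rfl⟩ | ⟨s, hs, rfl⟩)
    · rwa [H.mul_mem_cancel_right (hTH s hs)]
    · rwa [H.mul_mem_cancel_left (hTH s hs)]
  subst hS
  refine ⟨Finset.insert_mul_insert_self xk T, ?_, ?_, ?_⟩
  · exact Finset.disjoint_singleton_right.mpr fun h => hxxH (hTT _ h)
  · exact Finset.disjoint_left.mpr fun y hy hy' => hxT y hy' (hTT y hy)
  · refine Finset.disjoint_singleton_left.mpr fun h => ?_
    simp only [Finset.mem_union, Finset.mem_image, mul_right_inj, mul_left_inj] at h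
    obtain ⟨s, hs, rfl⟩ | ⟨s, hs, rfl⟩ := h <;> exact hxH (hTH _ hs)

/-- The decomposition `S² = T² ∪ {x_k²} ∪ (x_kT ∪ Tx_k)` is a disjoint union when
`⟨T⟩` is abelian, `x_k` exceeds every element of `T` and `x_k ∉ C_G(T)`. -/
theorem stmt_15 {G : Type*} [Group G] [LinearOrder G]
    [CovariantClass G G (· * ·) (· < ·)]
    [CovariantClass G G (Function.swap (· * ·)) (· < ·)]
    (hG : ∀ x y : G, ⁅x, y⁆ ∈ Subgroup.center G)
    (T : Finset G) (xk : G)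
    (hgt : ∀ t ∈ T, t < xk)
    (hTab : ∀ u ∈ Subgroup.closure (T : Set G), ∀ v ∈ Subgroup.closure (T : Set G),
      u * v = v * u)
    (hnc : ∃ t ∈ T, xk * t ≠ t * xk)
    (S : Finset G) (hS : S = insert xk T) :
    S * S = (T * T) ∪ {xk * xk} ∪ (T.image (fun t => xk * t) ∪ T.image (fun t => t * xk)) ∧
    Disjoint (T * T) ({xk * xk} : Finset G) ∧
    Disjoint (T * T) (T.image (fun t => xk * t) ∪ T.image (fun t => t * xk)) ∧
    Disjoint ({xk * xk} : Finset G)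
      (T.image (fun t => xk * t) ∪ T.image (fun t => t * xk)) :=
  stmt_15_general hG T xk hTab hnc S hS
end

section
/- Let G be a group of nilpotency class 2 and let a, b, c ∈ G satisfy b⁻¹a⁻¹ba·c^l = b⁻¹c^j b (equivalently ba·c^l = a·c^j·b) for integers l ≠ j, with a, c commuting. Then c^{j-l} ∈ Z(⟨a,b,c⟩), and if moreover G is torsion-free then c ∈ Z(⟨a,b,c⟩) and either ab = ba·c^{l-j} (if l > j) or ba = ab·c^{j-l} (if j > l). -/
open Pointwise
open scoped commutatorElement

/-!
Conjugating `a * c ^ l` by `b` gives `a * c ^ j`, so `c ^ (j - l) = ⁅b, a * c ^ l⁆` is a commutator,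
hence central. In class two `⁅x, c ^ n⁆ = ⁅x, c⁆ ^ n`, so centrality of `c ^ (j - l)` makes every
`⁅x, c⁆` a torsion element; torsion-freeness then makes `c` central, and the relation between
`a * b` and `b * a` is read off from the hypothesis.
-/

theorem commutatorElement_eq_mul_inv_of_mul_eq {G : Type*} [Group G] {b x y : G}
    (h : b * x = y * b) : ⁅b, x⁆ = y * x⁻¹ := by
  rw [commutatorElement_def, h, mul_inv_cancel_right]

theorem commutatorElement_zpow_right_of_commute {G : Type*} [Group G] {x c : G}
    (hc : Commute ⁅x, c⁆ c) (n : ℤ) : ⁅x, c ^ n⁆ = ⁅x, c⁆ ^ n := by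
  have hconj : x * c * x⁻¹ = ⁅x, c⁆ * c := by rw [commutatorElement_def]; group
  rw [commutatorElement_def, ← conj_zpow, hconj, hc.mul_zpow, mul_inv_cancel_right]

theorem zpow_sub_eq_commutatorElement {G : Type*} [Group G] {a b c : G} (hac : Commute a c)
    {l j : ℤ} (h : b * a * c ^ l = a * c ^ j * b) : c ^ (j - l) = ⁅b, a * c ^ l⁆ := by
  rw [commutatorElement_eq_mul_inv_of_mul_eq (by rw [← mul_assoc, h]), mul_inv_rev,
    ← mul_assoc, mul_assoc a, ← zpow_neg, ← zpow_add, ← sub_eq_add_neg,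
    (hac.zpow_right _).eq, mul_inv_cancel_right]

theorem mem_center_of_zpow_mem_center {G : Type*} [Group G]
    (hG : ∀ x y : G, ⁅x, y⁆ ∈ Subgroup.center G)
    (htf : ∀ (g : G) (n : ℕ), 0 < n → g ^ n = 1 → g = 1)
    {c : G} {n : ℤ} (hn : n ≠ 0) (hcn : c ^ n ∈ Subgroup.center G) : c ∈ Subgroup.center G := by
  refine Subgroup.mem_center_iff.mpr fun x => commutatorElement_eq_one_iff_commute.mp ?_
  have hpow : ⁅x, c⁆ ^ n = 1 := by
    rw [← commutatorElement_zpow_right_of_commute ((Subgroup.mem_center_iff.mp (hG x c) c).symm),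
      commutatorElement_eq_one_iff_commute]
    exact (Subgroup.mem_center_iff.mp hcn x)
  exact htf _ n.natAbs (Int.natAbs_pos.mpr hn) (pow_natAbs_eq_one.mpr hpow)

/-- From `ba·c^l = a·c^j·b` with `l ≠ j` and `ac = ca` in a class-2 group:
`c^(j-l)` is central in `⟨a,b,c⟩`; if moreover `G` is torsion-free then `c` itself is
central in `⟨a,b,c⟩` and `ab = ba·c^(l-j)` (if `l > j`) or `ba = ab·c^(j-l)` (if `j > l`). -/
theorem stmt_16 {G : Type*} [Group G]
    (hG : ∀ x y : G, ⁅x, y⁆ ∈ Subgroup.center G)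
    (a b c : G) (hac : a * c = c * a)
    (l j : ℤ) (hlj : l ≠ j)
    (h : b * a * c ^ l = a * c ^ j * b) :
    (∀ g ∈ Subgroup.closure ({a, b, c} : Set G),
      g * c ^ (j - l) = c ^ (j - l) * g) ∧
    ((∀ (g : G) (n : ℕ), 0 < n → g ^ n = 1 → g = 1) →
      (∀ g ∈ Subgroup.closure ({a, b, c} : Set G), g * c = c * g) ∧
      (j < l → a * b = b * a * c ^ (l - j)) ∧
      (l < j → b * a = a * b * c ^ (j - l))) := by
  have hpow : c ^ (j - l) ∈ Subgroup.center G := zpow_sub_eq_commutatorElement hac h ▸ hG _ _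
  refine ⟨fun g _ => Subgroup.mem_center_iff.mp hpow g, fun htf => ?_⟩
  have hc : ∀ g : G, g * c = c * g := Subgroup.mem_center_iff.mp
    (mem_center_of_zpow_mem_center hG htf (sub_ne_zero.mpr hlj.symm) hpow)
  have hab : b * a * c ^ l = a * b * c ^ j := by
    rw [h, mul_assoc, ← (Commute.zpow_right (hc b) j).eq, mul_assoc]
  refine ⟨fun g _ => hc g, fun _ => ?_, fun _ => ?_⟩
  · rw [zpow_sub, ← mul_assoc, hab, mul_inv_cancel_right]
  · rw [zpow_sub, ← mul_assoc, ← hab, mul_inv_cancel_right]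
end
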